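/- arXiv:2411.02289 — 9 statements merged into one kernel-verified Lean document; each statement's English description precedes it below -/
import Mathlib

section
/- No-programming theorem: let G be a unitary complex matrix on ℂ^D ⊗ ℂ^P. Suppose there are unit vectors p, q ∈ ℂ^P (program states), unit vectors p', q' ∈ ℂ^P, and unitary D×D matrices U_p, U_q such that G(d ⊗ p) = (U_p d) ⊗ p' and G(d ⊗ q) = (U_q d) ⊗ q' for every d ∈ ℂ^D. If U_qᴴ·U_p is not a complex scalar multiple of the identity matrix, then ⟨q, p⟩ = 0; that is, program states implementing unitary transformations that differ by more than a global phase are necessarily orthogonal. -/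
/-!
Unitarity of `G` preserves the inner product of `d ⊗ q` and `e ⊗ p`, and the inner product of
product vectors factors. Hence `⟨d, e⟩⟨q, p⟩ = ⟨U_q d, U_p e⟩⟨q', p'⟩` for all `d, e`, that is
`⟨q, p⟩ • 1 = ⟨q', p'⟩ • U_qᴴ U_p`. If `⟨q', p'⟩ ≠ 0` this makes `U_qᴴ U_p` a scalar, so
`⟨q', p'⟩ = 0`, and then `⟨q, p⟩ • 1 = 0` forces `⟨q, p⟩ = 0`.
-/

open Matrix

namespace Matrix

variable {m n κ α : Type*}

theorem star_mulVec_dotProduct_mulVec [Fintype m] [Fintype n] [Fintype κ] [Semiring α] [StarRing α]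
    (A : Matrix m n α) (B : Matrix m κ α) (x : n → α) (y : κ → α) :
    star (A *ᵥ x) ⬝ᵥ (B *ᵥ y) = star x ⬝ᵥ ((Aᴴ * B) *ᵥ y) := by
  rw [star_mulVec, dotProduct_mulVec, vecMul_vecMul, ← dotProduct_mulVec]

theorem star_prod_dotProduct_prod [Fintype m] [Fintype n] [CommSemiring α] [StarRing α]
    (a c : m → α) (b e : n → α) :
    star (fun x : m × n => a x.1 * b x.2) ⬝ᵥ (fun x => c x.1 * e x.2)
      = (star a ⬝ᵥ c) * (star b ⬝ᵥ e) := by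
  simp only [dotProduct, Fintype.sum_prod_type, Finset.sum_mul_sum, Pi.star_apply, star_mul']
  exact Finset.sum_congr rfl fun _ _ => Finset.sum_congr rfl fun _ _ => by ring

theorem ext_of_star_dotProduct_mulVec [Fintype m] [Fintype n] [Semiring α] [StarRing α]
    {A B : Matrix m n α} (h : ∀ x y, star x ⬝ᵥ (A *ᵥ y) = star x ⬝ᵥ (B *ᵥ y)) : A = B := by
  classical
  ext i j
  simpa [mulVec_single_one, Pi.star_single] using h (Pi.single i 1) (Pi.single j 1)

theorem eq_zero_of_smul_one_eq_smul [Field α] [DecidableEq n] {M : Matrix n n α} {s t : α}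
    (h : s • (1 : Matrix n n α) = t • M) (hM : ¬ ∃ c : α, M = c • 1) : s = 0 := by
  rcases isEmpty_or_nonempty n with _ | ⟨⟨i⟩⟩
  · exact absurd ⟨0, Subsingleton.elim _ _⟩ hM
  by_contra hs
  have ht : t ≠ 0 := by
    rintro rfl
    simpa [hs] using congr_fun (congr_fun h i) i
  exact hM ⟨s / t, by rw [div_eq_inv_mul, mul_smul, h, inv_smul_smul₀ ht]⟩

end Matrix

theorem no_programming_general
    (D P : ℕ)
    (G : Matrix (Fin D × Fin P) (Fin D × Fin P) ℂ)
    (hG : G ∈ Matrix.unitaryGroup (Fin D × Fin P) ℂ)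
    (p q p' q' : Fin P → ℂ)
    (Up Uq : Matrix (Fin D) (Fin D) ℂ)
    (hGp : ∀ d : Fin D → ℂ,
      G.mulVec (fun x => d x.1 * p x.2) = fun x => (Up.mulVec d) x.1 * p' x.2)
    (hGq : ∀ d : Fin D → ℂ,
      G.mulVec (fun x => d x.1 * q x.2) = fun x => (Uq.mulVec d) x.1 * q' x.2)
    (hdiff : ¬ ∃ c : ℂ, Uqᴴ * Up = c • (1 : Matrix (Fin D) (Fin D) ℂ)) :
    ∑ n, star (q n) * p n = 0 := by
  have hGG : Gᴴ * G = 1 := mem_unitaryGroup_iff'.mp hG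
  refine eq_zero_of_smul_one_eq_smul (s := star q ⬝ᵥ p) (t := star q' ⬝ᵥ p') ?_ hdiff
  refine ext_of_star_dotProduct_mulVec fun d e => ?_
  have h := star_mulVec_dotProduct_mulVec G G (fun x => d x.1 * q x.2) (fun x => e x.1 * p x.2)
  rw [hGq, hGp, hGG, one_mulVec, star_prod_dotProduct_prod, star_prod_dotProduct_prod,
    star_mulVec_dotProduct_mulVec] at h
  simp only [smul_mulVec, one_mulVec, dotProduct_smul, smul_eq_mul]
  linear_combination -h

/-- No-programming theorem: program states implementing unitaries that
differ by more than a global phase are orthogonal. -/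
theorem no_programming
    (D P : ℕ)
    (G : Matrix (Fin D × Fin P) (Fin D × Fin P) ℂ)
    (hG : G ∈ Matrix.unitaryGroup (Fin D × Fin P) ℂ)
    (p q p' q' : Fin P → ℂ)
    (hp : ∑ n, star (p n) * p n = 1) (hq : ∑ n, star (q n) * q n = 1)
    (hp' : ∑ n, star (p' n) * p' n = 1) (hq' : ∑ n, star (q' n) * q' n = 1)
    (Up Uq : Matrix (Fin D) (Fin D) ℂ)
    (hUp : Up ∈ Matrix.unitaryGroup (Fin D) ℂ)
    (hUq : Uq ∈ Matrix.unitaryGroup (Fin D) ℂ)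
    (hGp : ∀ d : Fin D → ℂ,
      G.mulVec (fun x => d x.1 * p x.2) = fun x => (Up.mulVec d) x.1 * p' x.2)
    (hGq : ∀ d : Fin D → ℂ,
      G.mulVec (fun x => d x.1 * q x.2) = fun x => (Uq.mulVec d) x.1 * q' x.2)
    (hdiff : ¬ ∃ c : ℂ, Uqᴴ * Up = c • (1 : Matrix (Fin D) (Fin D) ℂ)) :
    ∑ n, star (q n) * p n = 0 :=
  no_programming_general D P G hG p q p' q' Up Uq hGp hGq hdiff
end

section
/- Unitary freedom of ensemble decompositions: let ρ be an n×n complex matrix admitting two decompositions ρ = Σ_{j<L} p_j |Φ_j⟩⟨Φ_j| = Σ_{k<L} q_k |φ_k⟩⟨φ_k|, where p_j, q_k ≥ 0 are reals and Φ_j, φ_k ∈ ℂ^n are unit vectors (the two ensembles having been padded with zero probabilities to a common length L). Then there exists a unitary L×L complex matrix (u_{jk}) such that √p_j · Φ_j = Σ_{k<L} u_{jk} · √q_k · φ_k for every j < L. -/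
open Matrix

noncomputable section

variable {L n : ℕ}

private def toLp' : (Fin L → ℂ) ≃ₗ[ℂ] EuclideanSpace ℂ (Fin L) :=
  (WithLp.linearEquiv 2 ℂ (Fin L → ℂ)).symm

private lemma toLp'_apply (v : Fin L → ℂ) (j : Fin L) : (toLp' v : Fin L → ℂ) j = v j := rfl

private lemma inner_toLp' (v w : Fin L → ℂ) :
    (inner ℂ (toLp' v) (toLp' w) : ℂ) = star v ⬝ᵥ w := by
  simp [PiLp.inner_apply, toLp'_apply, dotProduct, mul_comm]

private lemma gram_dotProduct (M : Matrix (Fin L) (Fin n) ℂ) (x y : Fin n → ℂ) :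
    star (M *ᵥ x) ⬝ᵥ (M *ᵥ y) = (star x ᵥ* (Mᴴ * M)) ⬝ᵥ y := by
  rw [star_mulVec, dotProduct_mulVec, vecMul_vecMul]

lemma exists_unitary_of_gram_eq (A B : Matrix (Fin L) (Fin n) ℂ)
    (h : Aᴴ * A = Bᴴ * B) :
    ∃ u : Matrix (Fin L) (Fin L) ℂ, u ∈ Matrix.unitaryGroup (Fin L) ℂ ∧ A = u * B := by
  classical
  set lA : (Fin n → ℂ) →ₗ[ℂ] EuclideanSpace ℂ (Fin L) :=
    toLp'.toLinearMap ∘ₗ A.mulVecLin with hlA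
  set lB : (Fin n → ℂ) →ₗ[ℂ] EuclideanSpace ℂ (Fin L) :=
    toLp'.toLinearMap ∘ₗ B.mulVecLin with hlB
  have hinner : ∀ x y, (inner ℂ (lA x) (lA y) : ℂ) = inner ℂ (lB x) (lB y) := by
    intro x y
    simp only [hlA, hlB, LinearMap.comp_apply, LinearEquiv.coe_coe, mulVecLin_apply]
    rw [inner_toLp', inner_toLp', gram_dotProduct, gram_dotProduct, h]
  have hker : LinearMap.ker lB ≤ LinearMap.ker lA := by
    intro x hx
    rw [LinearMap.mem_ker] at hx ⊢
    have := hinner x x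
    rw [hx, inner_zero_right, inner_self_eq_zero] at this
    exact this
  set f : ↥(LinearMap.range lB) →ₗ[ℂ] EuclideanSpace ℂ (Fin L) :=
    ((LinearMap.ker lB).liftQ lA hker) ∘ₗ lB.quotKerEquivRange.symm.toLinearMap with hf
  have hfB : ∀ x : Fin n → ℂ, f ⟨lB x, LinearMap.mem_range_self _ x⟩ = lA x := by
    intro x
    have h1 : lB.quotKerEquivRange.symm ⟨lB x, LinearMap.mem_range_self _ x⟩ =
        Submodule.Quotient.mk x := lB.quotKerEquivRange_symm_apply_image x _
    simp [hf, h1, Submodule.liftQ_apply]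
  have hnorm : ∀ s : ↥(LinearMap.range lB), ‖f s‖ = ‖s‖ := by
    rintro ⟨s, x, rfl⟩
    have h1 : f ⟨lB x, LinearMap.mem_range_self _ x⟩ = lA x := hfB x
    rw [h1]
    have h2 : (inner ℂ (lA x) (lA x) : ℂ) = inner ℂ (lB x) (lB x) := hinner x x
    rw [inner_self_eq_norm_sq_to_K, inner_self_eq_norm_sq_to_K] at h2
    have h3 : (‖lA x‖ : ℝ) ^ 2 = ‖lB x‖ ^ 2 := by exact_mod_cast h2
    calc ‖lA x‖ = ‖lB x‖ := by
          nlinarith [norm_nonneg (lA x), norm_nonneg (lB x)]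
      _ = ‖(⟨lB x, LinearMap.mem_range_self _ x⟩ : ↥(LinearMap.range lB))‖ := rfl
  set fi : ↥(LinearMap.range lB) →ₗᵢ[ℂ] EuclideanSpace ℂ (Fin L) := ⟨f, hnorm⟩ with hfi
  set g := fi.extend with hg
  have hgB : ∀ x : Fin n → ℂ, g (lB x) = lA x := by
    intro x
    have : g ((⟨lB x, LinearMap.mem_range_self _ x⟩ : ↥(LinearMap.range lB)) : _) =
        fi ⟨lB x, LinearMap.mem_range_self _ x⟩ := fi.extend_apply _
    simpa [hfi, hfB x] using this
  set glm : (Fin L → ℂ) →ₗ[ℂ] (Fin L → ℂ) :=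
    toLp'.symm.toLinearMap ∘ₗ g.toLinearMap ∘ₗ toLp'.toLinearMap with hglm
  set u : Matrix (Fin L) (Fin L) ℂ := LinearMap.toMatrix' glm with hu
  have humv : ∀ v, u *ᵥ v = glm v := by
    intro v
    rw [hu, ← Matrix.toLin'_apply, Matrix.toLin'_toMatrix']
  have hgapp : ∀ v : Fin L → ℂ, ∀ j, (g (toLp' v) : Fin L → ℂ) j = (u *ᵥ v) j := by
    intro v j
    rw [humv]
    simp [hglm]
    rfl
  refine ⟨u, ?_, ?_⟩
  · rw [Matrix.mem_unitaryGroup_iff']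
    ext k k'
    have hcol : ∀ (kk jj : Fin L), u jj kk = (g (toLp' (Pi.single kk 1)) : Fin L → ℂ) jj := by
      intro kk jj
      rw [hgapp]
      simp
    have h5 : (star u * u) k k' =
        (inner ℂ (g (toLp' (Pi.single k 1))) (g (toLp' (Pi.single k' 1))) : ℂ) := by
      rw [PiLp.inner_apply]
      simp only [Matrix.mul_apply, Matrix.star_apply, RCLike.inner_apply, hcol]
      exact Finset.sum_congr rfl fun _ _ => mul_comm _ _
    rw [h5, g.inner_map_map, inner_toLp']
    simp [dotProduct, Pi.single_apply, Matrix.one_apply, eq_comm]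
  · ext j i
    have h1 : A j i = (A *ᵥ Pi.single i 1) j := by simp
    have h2 : (u * B) j i = ((u * B) *ᵥ Pi.single i 1) j := by simp
    rw [h1, h2, ← mulVec_mulVec]
    have h3 : B *ᵥ Pi.single i 1 = (toLp'.symm (lB (Pi.single i 1)) : Fin L → ℂ) := by
      simp [hlB]
    have h4 : A *ᵥ Pi.single i 1 = (toLp'.symm (lA (Pi.single i 1)) : Fin L → ℂ) := by
      simp [hlA]
    rw [h4, ← hgB]
    have h6 := hgapp (B *ᵥ Pi.single i 1) j
    rw [← h6]
    rfl

/-- Unitary freedom of ensemble decompositions of a mixed state. -/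
theorem ensemble_decompositions_unitarily_related
    (n L : ℕ) (ρ : Matrix (Fin n) (Fin n) ℂ)
    (p q : Fin L → ℝ) (hp : ∀ j, 0 ≤ p j) (hq : ∀ k, 0 ≤ q k)
    (Φ φ : Fin L → (Fin n → ℂ))
    (hΦ : ∀ j, ∑ i, star (Φ j i) * Φ j i = 1)
    (hφ : ∀ k, ∑ i, star (φ k i) * φ k i = 1)
    (hρ1 : ρ = ∑ j : Fin L, (p j : ℂ) • vecMulVec (Φ j) (star (Φ j)))
    (hρ2 : ρ = ∑ k : Fin L, (q k : ℂ) • vecMulVec (φ k) (star (φ k))) :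
    ∃ u : Matrix (Fin L) (Fin L) ℂ, u ∈ Matrix.unitaryGroup (Fin L) ℂ ∧
      ∀ j, (Real.sqrt (p j) : ℂ) • Φ j =
        ∑ k : Fin L, u j k • ((Real.sqrt (q k) : ℂ) • φ k) := by
  have key : ∀ (c : Fin L → ℝ), (∀ j, 0 ≤ c j) → ∀ (ψ : Fin L → Fin n → ℂ),
      (Matrix.of fun j i => (Real.sqrt (c j) : ℂ) * ψ j i)ᴴ *
        (Matrix.of fun j i => (Real.sqrt (c j) : ℂ) * ψ j i)
        = (∑ j : Fin L, (c j : ℂ) • vecMulVec (ψ j) (star (ψ j)))ᵀ := by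
    intro c hc ψ
    ext i i'
    simp only [Matrix.mul_apply, Matrix.conjTranspose_apply, Matrix.transpose_apply,
      Matrix.sum_apply, vecMulVec_apply, Matrix.smul_apply, Matrix.of_apply, smul_eq_mul,
      Pi.star_apply, star_mul', _root_.map_mul, Complex.conj_ofReal, RCLike.star_def]
    refine Finset.sum_congr rfl fun j _ => ?_
    have hsq : ((Real.sqrt (c j) : ℂ)) * (Real.sqrt (c j) : ℂ) = (c j : ℂ) := by
      rw [← Complex.ofReal_mul, Real.mul_self_sqrt (hc j)]
    calc ((Real.sqrt (c j) : ℂ) * (starRingEnd ℂ) (ψ j i)) * ((Real.sqrt (c j) : ℂ) * ψ j i')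
        = ((Real.sqrt (c j) : ℂ) * (Real.sqrt (c j) : ℂ)) *
            (ψ j i' * (starRingEnd ℂ) (ψ j i)) := by ring
      _ = (c j : ℂ) * (ψ j i' * (starRingEnd ℂ) (ψ j i)) := by rw [hsq]
  set A : Matrix (Fin L) (Fin n) ℂ := Matrix.of fun j i => (Real.sqrt (p j) : ℂ) * Φ j i with hA
  set B : Matrix (Fin L) (Fin n) ℂ := Matrix.of fun k i => (Real.sqrt (q k) : ℂ) * φ k i with hB
  have hgram : Aᴴ * A = Bᴴ * B := by
    rw [hA, hB, key p hp Φ, key q hq φ, ← hρ1, ← hρ2]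
  obtain ⟨u, huu, hAB⟩ := exists_unitary_of_gram_eq A B hgram
  refine ⟨u, huu, fun j => ?_⟩
  funext i
  have h1 : A j i = (u * B) j i := by rw [hAB]
  simp only [hA, hB, Matrix.mul_apply, Matrix.of_apply] at h1
  simpa [Finset.sum_apply, mul_assoc] using h1

end
end

section
/- Unitary freedom of Kraus representations: let (A_i)_{i<L} and (B_j)_{j<L} be two families of m×n complex matrices (the shorter family having been padded with zero matrices to a common length L). Then Σ_{i<L} A_i · X · A_iᴴ = Σ_{j<L} B_j · X · B_jᴴ holds for every n×n complex matrix X if and only if there exists a unitary L×L complex matrix (u_{ij}) such that A_i = Σ_{j<L} u_{ij} · B_j for every i < L. -/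
open Matrix

/-- Evaluation of a finite sum of scaled vectors in Euclidean space. -/
lemma euclid_sum_smul_apply {L : ℕ} {κ : Type*} [Fintype κ] (c : κ → ℂ)
    (y : κ → EuclideanSpace ℂ (Fin L)) (i : Fin L) :
    (∑ j, c j • y j) i = ∑ j, c j * y j i := by
  have heval : ∀ z : EuclideanSpace ℂ (Fin L),
      z i = inner ℂ (EuclideanSpace.single i (1:ℂ)) z := by
    intro z
    rw [EuclideanSpace.inner_single_left]
    simp
  rw [heval (∑ j, c j • y j), inner_sum]
  exact Finset.sum_congr rfl fun j _ => by rw [inner_smul_right, ← heval (y j)]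

/-- Two families of vectors with equal Gram matrices are related by a unitary. -/
lemma exists_unitary_of_gram_eq_s3 {ι : Type*} [Fintype ι] [DecidableEq ι] {L : ℕ}
    (v w : ι → EuclideanSpace ℂ (Fin L))
    (hvw : ∀ α β, (inner ℂ (v α) (v β) : ℂ) = inner ℂ (w α) (w β)) :
    ∃ u : Matrix (Fin L) (Fin L) ℂ, u ∈ Matrix.unitaryGroup (Fin L) ℂ ∧
      ∀ α i, v α i = ∑ j, w α j * u i j := by
  classical
  let V : (ι → ℂ) →ₗ[ℂ] EuclideanSpace ℂ (Fin L) :=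
    { toFun := fun x => ∑ α, x α • v α
      map_add' := by intro x y; simp [add_smul, Finset.sum_add_distrib]
      map_smul' := by intro c x; simp [smul_smul, Finset.smul_sum] }
  let W : (ι → ℂ) →ₗ[ℂ] EuclideanSpace ℂ (Fin L) :=
    { toFun := fun x => ∑ α, x α • w α
      map_add' := by intro x y; simp [add_smul, Finset.sum_add_distrib]
      map_smul' := by intro c x; simp [smul_smul, Finset.smul_sum] }
  have hVW : ∀ x, (inner ℂ (W x) (W x) : ℂ) = inner ℂ (V x) (V x) := by
    intro x
    simp only [V, W, LinearMap.coe_mk, AddHom.coe_mk]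
    rw [sum_inner, sum_inner]
    refine Finset.sum_congr rfl fun α _ => ?_
    rw [inner_sum, inner_sum]
    refine Finset.sum_congr rfl fun β _ => ?_
    rw [inner_smul_left, inner_smul_left, inner_smul_right, inner_smul_right, hvw]
  have hnorm : ∀ x, ‖W x‖ = ‖V x‖ := by
    intro x
    rw [norm_eq_sqrt_re_inner (𝕜 := ℂ), norm_eq_sqrt_re_inner (𝕜 := ℂ), hVW]
  have hker : LinearMap.ker W ≤ LinearMap.ker V := by
    intro x hx
    rw [LinearMap.mem_ker] at hx ⊢
    have := hnorm x
    rw [hx, norm_zero] at this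
    exact norm_eq_zero.mp this.symm
  let e := W.quotKerEquivRange
  let Vb : ((ι → ℂ) ⧸ LinearMap.ker W) →ₗ[ℂ] EuclideanSpace ℂ (Fin L) :=
    (LinearMap.ker W).liftQ V hker
  let f : LinearMap.range W →ₗ[ℂ] EuclideanSpace ℂ (Fin L) := Vb ∘ₗ (e.symm : _ →ₗ[ℂ] _)
  have hf : ∀ (x : ι → ℂ) (hx : W x ∈ LinearMap.range W), f ⟨W x, hx⟩ = V x := by
    intro x hx
    have he : e.symm ⟨W x, hx⟩ = Submodule.Quotient.mk x := by
      rw [LinearEquiv.symm_apply_eq]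
      exact Subtype.ext (W.quotKerEquivRange_apply_mk x)
    simp only [f, LinearMap.comp_apply, LinearEquiv.coe_coe, he, Vb, Submodule.liftQ_apply]
  have hfiso : ∀ s : LinearMap.range W, ‖f s‖ = ‖s‖ := by
    rintro ⟨s, hs⟩
    obtain ⟨x, rfl⟩ := hs
    rw [hf x (LinearMap.mem_range_self W x)]
    exact (hnorm x).symm
  let fI : LinearMap.range W →ₗᵢ[ℂ] EuclideanSpace ℂ (Fin L) := ⟨f, hfiso⟩
  let U := fI.extend
  have hU : ∀ α, U (w α) = v α := by
    intro α
    have hWα : W (Pi.single α 1) = w α := by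
      simp only [W, LinearMap.coe_mk, AddHom.coe_mk, Pi.single_apply, ite_smul, one_smul,
        zero_smul]
      rw [Finset.sum_ite_eq' Finset.univ α w]
      simp
    have hVα : V (Pi.single α 1) = v α := by
      simp only [V, LinearMap.coe_mk, AddHom.coe_mk, Pi.single_apply, ite_smul, one_smul,
        zero_smul]
      rw [Finset.sum_ite_eq' Finset.univ α v]
      simp
    have hmem : w α ∈ LinearMap.range W := ⟨Pi.single α 1, hWα⟩
    have h1 : U (w α) = fI ⟨w α, hmem⟩ := LinearIsometry.extend_apply fI ⟨w α, hmem⟩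
    have h2 : (⟨w α, hmem⟩ : LinearMap.range W)
        = ⟨W (Pi.single α 1), LinearMap.mem_range_self W _⟩ := Subtype.ext hWα.symm
    rw [h1]
    show f (⟨w α, hmem⟩ : LinearMap.range W) = v α
    rw [h2, hf, hVα]
  refine ⟨Matrix.of fun i j => U (EuclideanSpace.single j 1) i, ?_, ?_⟩
  · rw [Matrix.mem_unitaryGroup_iff']
    ext j k
    have h1 := U.inner_map_map (EuclideanSpace.single j (1:ℂ)) (EuclideanSpace.single k 1)
    rw [PiLp.inner_apply, PiLp.inner_apply] at h1
    simp only [RCLike.inner_apply, EuclideanSpace.single_apply] at h1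
    simp only [Matrix.mul_apply, Matrix.star_apply, Matrix.one_apply, Matrix.of_apply,
      RCLike.star_def]
    simp_rw [mul_comm ((starRingEnd ℂ) _) _]
    rw [h1]
    simp [apply_ite, Finset.sum_ite_eq, eq_comm]
  · intro α i
    have hx : w α = ∑ j, w α j • EuclideanSpace.single j (1:ℂ) := by
      conv_lhs => rw [← (EuclideanSpace.basisFun (Fin L) ℂ).sum_repr (w α)]
      simp [EuclideanSpace.basisFun_repr, EuclideanSpace.basisFun_apply]
    have h2 : U (w α) i = v α i := by rw [hU α]
    rw [← h2]
    conv_lhs => rw [hx]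
    rw [map_sum]
    simp only [LinearIsometry.map_smul, Matrix.of_apply]
    exact euclid_sum_smul_apply _ _ i

/-- Unitary freedom of Kraus representations. -/
theorem kraus_representations_unitarily_related
    (m n L : ℕ)
    (A B : Fin L → Matrix (Fin m) (Fin n) ℂ) :
    (∀ X : Matrix (Fin n) (Fin n) ℂ,
        ∑ i : Fin L, A i * X * (A i)ᴴ = ∑ j : Fin L, B j * X * (B j)ᴴ) ↔
    (∃ u : Matrix (Fin L) (Fin L) ℂ, u ∈ Matrix.unitaryGroup (Fin L) ℂ ∧
      ∀ i, A i = ∑ j : Fin L, u i j • B j) := by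
  constructor
  · intro h
    have gram : ∀ (r s : Fin m) (p q : Fin n),
        ∑ i, A i r p * (starRingEnd ℂ) (A i s q)
          = ∑ i, B i r p * (starRingEnd ℂ) (B i s q) := by
      intro r s p q
      have := congrFun (congrFun (h (Matrix.single p q 1)) r) s
      simpa [Matrix.sum_apply, Matrix.mul_apply, Matrix.conjTranspose_apply,
        Matrix.single, ite_and, Finset.sum_ite_eq, Finset.sum_ite_eq'] using this
    obtain ⟨u, huni, hu⟩ := exists_unitary_of_gram_eq_s3
      (fun α : Fin m × Fin n => (WithLp.toLp 2 (fun i => A i α.1 α.2) : EuclideanSpace ℂ (Fin L)))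
      (fun α : Fin m × Fin n => (WithLp.toLp 2 (fun i => B i α.1 α.2) : EuclideanSpace ℂ (Fin L)))
      (by
        intro α β
        rw [PiLp.inner_apply, PiLp.inner_apply]
        simp only [RCLike.inner_apply]
        have := gram β.1 α.1 β.2 α.2
        exact this)
    refine ⟨u, huni, fun i => ?_⟩
    ext r p
    have := hu (r, p) i
    rw [Matrix.sum_apply]
    rw [show A i r p = _ from this]
    refine Finset.sum_congr rfl fun j _ => ?_
    simp [Matrix.smul_apply, mul_comm]
  · rintro ⟨u, huni, hA⟩ X
    have h1 : star u * u = 1 := Matrix.mem_unitaryGroup_iff'.mp huni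
    simp_rw [hA]
    have expand : ∀ i, (∑ j, u i j • B j) * X * (∑ j, u i j • B j)ᴴ
        = ∑ j, ∑ k, (star (u i k) * u i j) • (B j * X * (B k)ᴴ) := by
      intro i
      rw [conjTranspose_sum]
      simp_rw [conjTranspose_smul, Matrix.sum_mul, Matrix.mul_sum, Matrix.smul_mul,
        Matrix.mul_smul, smul_smul]
      refine Finset.sum_congr rfl fun j _ => Finset.sum_congr rfl fun k _ => ?_
      rw [mul_comm]
    simp_rw [expand]
    rw [Finset.sum_comm]
    rw [show (∑ j : Fin L, ∑ i : Fin L, ∑ k : Fin L,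
        (star (u i k) * u i j) • (B j * X * (B k)ᴴ))
        = ∑ j : Fin L, ∑ k : Fin L, ∑ i : Fin L,
        (star (u i k) * u i j) • (B j * X * (B k)ᴴ) from
      Finset.sum_congr rfl fun j _ => Finset.sum_comm]
    simp_rw [← Finset.sum_smul]
    have h2 : ∀ j k : Fin L, (∑ i, star (u i k) * u i j) = (1 : Matrix (Fin L) (Fin L) ℂ) k j := by
      intro j k
      rw [← h1]
      simp [Matrix.mul_apply, Matrix.star_apply]
    simp_rw [h2]
    simp [Matrix.one_apply, ite_smul]
end

section
/- Necessary and sufficient condition for deterministic equivalence under left unitary transformation: let G = Σ_{j,k<P} A_{jk} ⊗ E_{jk} and U = Σ_{r,q<P} U_{rq} ⊗ E_{rq} be unitary matrices on ℂ^D ⊗ ℂ^P, let Y = (y_{kq}) be a unitary P×P matrix, and let ξ ∈ ℂ^P be a unit vector. Then Tr_p[(U·G)(ρ ⊗ |ξ⟩⟨ξ|)(U·G)ᴴ] = Tr_p[G(ρ ⊗ |Yξ⟩⟨Yξ|)Gᴴ] holds for every D×D complex matrix ρ if and only if there exists a unitary P×P matrix (w_{rj}) such that Σ_{j,k<P} ξ_k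 · U_{rj} · A_{jk} = Σ_{j,k,q<P} w_{rj} · y_{kq} · ξ_q · A_{jk} for every r < P. -/
open Matrix Kronecker

/-- Partial trace over the program (second) tensor factor. -/
noncomputable def ptrProg (D P : ℕ)
    (M : Matrix (Fin D × Fin P) (Fin D × Fin P) ℂ) :
    Matrix (Fin D) (Fin D) ℂ :=
  Matrix.of fun d d' => ∑ n : Fin P, M (d, n) (d', n)

section AuxDetEquiv

set_option linter.unusedSectionVars false

variable {m n : Type*} [Fintype m] [DecidableEq m] [Fintype n] [DecidableEq n]

private lemma toEuclideanLin_mul' {p : Type*} [Fintype p] [DecidableEq p]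
    (M : Matrix m n ℂ) (N : Matrix n p ℂ) :
    Matrix.toEuclideanLin (M * N) = (Matrix.toEuclideanLin M).comp (Matrix.toEuclideanLin N) := by
  apply LinearMap.ext
  intro x
  simp [Matrix.toEuclideanLin_apply, Matrix.mulVec_mulVec]

private lemma inner_toEuclideanLin' (B C : Matrix m n ℂ) (h : Bᴴ * B = Cᴴ * C)
    (x y : EuclideanSpace ℂ n) :
    (inner ℂ (Matrix.toEuclideanLin B x) (Matrix.toEuclideanLin B y) : ℂ)
      = inner ℂ (Matrix.toEuclideanLin C x) (Matrix.toEuclideanLin C y) := by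
  have hB : (inner ℂ (Matrix.toEuclideanLin B x) (Matrix.toEuclideanLin B y) : ℂ)
      = inner ℂ x (Matrix.toEuclideanLin (Bᴴ * B) y) := by
    rw [toEuclideanLin_mul', Matrix.toEuclideanLin_conjTranspose_eq_adjoint]
    simp [LinearMap.adjoint_inner_right]
  have hC : (inner ℂ (Matrix.toEuclideanLin C x) (Matrix.toEuclideanLin C y) : ℂ)
      = inner ℂ x (Matrix.toEuclideanLin (Cᴴ * C) y) := by
    rw [toEuclideanLin_mul', Matrix.toEuclideanLin_conjTranspose_eq_adjoint]
    simp [LinearMap.adjoint_inner_right]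
  rw [hB, hC, h]

/-- Unitary freedom: if two matrices have equal Gram matrices, they differ by a left
unitary factor. -/
private lemma exists_unitary_factor (B C : Matrix m n ℂ) (h : Bᴴ * B = Cᴴ * C) :
    ∃ w : Matrix m m ℂ, w ∈ Matrix.unitaryGroup m ℂ ∧ B = w * C := by
  classical
  set f := Matrix.toEuclideanLin B with hf
  set g := Matrix.toEuclideanLin C with hg
  have hinner : ∀ x y, (inner ℂ (f x) (f y) : ℂ) = inner ℂ (g x) (g y) :=
    inner_toEuclideanLin' B C h
  have hnorm : ∀ x, ‖f x‖ = ‖g x‖ := by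
    intro x
    have := hinner x x
    rw [inner_self_eq_norm_sq_to_K, inner_self_eq_norm_sq_to_K] at this
    have h2 : (‖f x‖ : ℝ) ^ 2 = (‖g x‖ : ℝ) ^ 2 := by exact_mod_cast this
    nlinarith [norm_nonneg (f x), norm_nonneg (g x)]
  have hker : LinearMap.ker g ≤ LinearMap.ker f := by
    intro x hx
    rw [LinearMap.mem_ker] at hx ⊢
    have := hnorm x
    rw [hx, norm_zero] at this
    exact norm_eq_zero.mp this
  let φ : (EuclideanSpace ℂ n ⧸ LinearMap.ker g) →ₗ[ℂ] EuclideanSpace ℂ m :=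
    (LinearMap.ker g).liftQ f hker
  let ψ : (EuclideanSpace ℂ n ⧸ LinearMap.ker g) ≃ₗ[ℂ] LinearMap.range g :=
    g.quotKerEquivRange
  let L0 : (LinearMap.range g) →ₗ[ℂ] EuclideanSpace ℂ m := φ.comp (ψ.symm : _ →ₗ[ℂ] _)
  have hL0 : ∀ x : EuclideanSpace ℂ n, L0 ⟨g x, LinearMap.mem_range_self g x⟩ = f x := by
    intro x
    have : ψ (Submodule.Quotient.mk x) = ⟨g x, LinearMap.mem_range_self g x⟩ :=
      Subtype.ext (g.quotKerEquivRange_apply_mk x)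
    simp only [L0, LinearMap.comp_apply, LinearEquiv.coe_coe]
    rw [← this, LinearEquiv.symm_apply_apply]
    simp [φ]
  have hL0norm : ∀ s : LinearMap.range g, ‖L0 s‖ = ‖(s : EuclideanSpace ℂ m)‖ := by
    rintro ⟨s, x, rfl⟩
    rw [hL0 x]
    exact hnorm x
  let L : (LinearMap.range g) →ₗᵢ[ℂ] EuclideanSpace ℂ m := ⟨L0, hL0norm⟩
  let e : EuclideanSpace ℂ m →ₗᵢ[ℂ] EuclideanSpace ℂ m := L.extend
  have he : ∀ x : EuclideanSpace ℂ n, e (g x) = f x := by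
    intro x
    exact (L.extend_apply ⟨g x, LinearMap.mem_range_self g x⟩).trans (hL0 x)
  let w : Matrix m m ℂ := Matrix.toEuclideanLin.symm e.toLinearMap
  have hw : Matrix.toEuclideanLin w = e.toLinearMap := Matrix.toEuclideanLin.apply_symm_apply _
  have hwinner : ∀ x y : EuclideanSpace ℂ m,
      (inner ℂ (Matrix.toEuclideanLin w x) (Matrix.toEuclideanLin w y) : ℂ) = inner ℂ x y := by
    intro x y; rw [hw]; exact e.inner_map_map x y
  have hwu : wᴴ * w = 1 := by
    have : Matrix.toEuclideanLin (wᴴ * w) = Matrix.toEuclideanLin (1 : Matrix m m ℂ) := by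
      apply LinearMap.ext
      intro y
      apply ext_inner_left ℂ
      intro x
      rw [toEuclideanLin_mul', Matrix.toEuclideanLin_conjTranspose_eq_adjoint]
      simp only [LinearMap.comp_apply]
      rw [LinearMap.adjoint_inner_right, hwinner]
      simp [Matrix.toEuclideanLin_apply]
    exact Matrix.toEuclideanLin.injective this
  refine ⟨w, Matrix.mem_unitaryGroup_iff'.mpr hwu, ?_⟩
  have : Matrix.toEuclideanLin B = Matrix.toEuclideanLin (w * C) := by
    rw [toEuclideanLin_mul', hw]
    apply LinearMap.ext
    intro x
    exact (he x).symm
  exact Matrix.toEuclideanLin.injective this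

end AuxDetEquiv

section AuxChannel

private lemma ptrProg_sum {D P : ℕ} {ι : Type*} (s : Finset ι)
    (f : ι → Matrix (Fin D × Fin P) (Fin D × Fin P) ℂ) :
    ptrProg D P (∑ i ∈ s, f i) = ∑ i ∈ s, ptrProg D P (f i) := by
  ext d d'
  simp only [ptrProg, of_apply, Matrix.sum_apply]
  rw [Finset.sum_comm]

private lemma ptrProg_kron {D P : ℕ} (X : Matrix (Fin D) (Fin D) ℂ)
    (Y : Matrix (Fin P) (Fin P) ℂ) :
    ptrProg D P (X ⊗ₖ Y) = Y.trace • X := by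
  ext d d'
  simp only [ptrProg, of_apply, kroneckerMap_apply, Matrix.smul_apply, Matrix.trace,
    Matrix.diag, smul_eq_mul]
  rw [Finset.sum_mul]
  exact Finset.sum_congr rfl fun n _ => mul_comm _ _

private lemma kron_conjTranspose {l m n p : Type*} (A : Matrix l m ℂ) (B : Matrix n p ℂ) :
    (A ⊗ₖ B)ᴴ = Aᴴ ⊗ₖ Bᴴ := by
  ext ⟨i, j⟩ ⟨k, l⟩
  simp [conjTranspose_apply, kroneckerMap_apply, star_mul']

private lemma std_sandwich {P : ℕ} (j k k' j' : Fin P) (η : Fin P → ℂ) :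
    single j k (1:ℂ) * vecMulVec η (star η) * (single j' k' (1:ℂ))ᴴ
      = (η k * star (η k')) • single j j' (1:ℂ) := by
  ext a b
  simp [mul_apply, single, vecMulVec_apply, conjTranspose_apply, Pi.star_apply,
    Finset.sum_ite_eq, Finset.sum_ite_eq', smul_eq_mul, mul_comm, mul_left_comm, ite_and]
  by_cases h1 : j = a <;> by_cases h2 : j' = b <;> simp [h1, h2, mul_comm]

/-- Kraus form of the deterministically implemented channel. -/
private lemma ptr_kraus {D P : ℕ} (A : Fin P → Fin P → Matrix (Fin D) (Fin D) ℂ)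
    (η : Fin P → ℂ) (ρ : Matrix (Fin D) (Fin D) ℂ) :
    ptrProg D P ((∑ j : Fin P, ∑ k : Fin P, A j k ⊗ₖ single j k (1:ℂ))
        * (ρ ⊗ₖ vecMulVec η (star η))
        * (∑ j : Fin P, ∑ k : Fin P, A j k ⊗ₖ single j k (1:ℂ))ᴴ)
    = ∑ j : Fin P, (∑ k : Fin P, η k • A j k) * ρ * (∑ k : Fin P, η k • A j k)ᴴ := by
  have hterm : ∀ j k j' k' : Fin P,
      ptrProg D P ((A j k ⊗ₖ single j k (1:ℂ)) * (ρ ⊗ₖ vecMulVec η (star η))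
        * ((A j' k')ᴴ ⊗ₖ (single j' k' (1:ℂ))ᴴ))
      = (if j = j' then (η k * star (η k')) • (A j k * ρ * (A j' k')ᴴ) else 0) := by
    intro j k j' k'
    rw [← mul_kronecker_mul, ← mul_kronecker_mul, ptrProg_kron, std_sandwich]
    rw [trace_smul]
    by_cases h : j = j'
    · subst h
      simp [Matrix.trace, Matrix.diag, single, smul_smul]
    · simp only [h, if_false]
      have : (single j j' (1:ℂ)).trace = 0 := by
        rw [Matrix.trace]
        apply Finset.sum_eq_zero
        intro x _
        simp only [Matrix.diag_apply, single, of_apply, ite_eq_right_iff, and_imp]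
        rintro rfl rfl
        exact absurd rfl h
      rw [this]
      simp
  simp only [conjTranspose_sum, kron_conjTranspose, Finset.sum_mul, Finset.mul_sum,
    ptrProg_sum, hterm]
  refine Finset.sum_congr rfl fun j _ => ?_
  refine Finset.sum_congr rfl fun x _ => ?_
  rw [Finset.sum_comm]
  simp only [Finset.sum_ite_eq', Finset.mem_univ, if_true]
  refine Finset.sum_congr rfl fun k _ => ?_
  simp only [Matrix.conjTranspose_smul, mul_smul_comm, smul_smul, smul_mul_assoc]
  rw [mul_comm]

private lemma sandwich_entry {D : ℕ} (M : Matrix (Fin D) (Fin D) ℂ) (a b x y : Fin D) :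
    (M * single a b (1:ℂ) * Mᴴ) x y = M x a * star (M y b) := by
  simp [mul_apply, single, conjTranspose_apply, ite_and, Finset.sum_ite_eq,
    Finset.mul_sum, Finset.sum_mul]

private lemma chan_expand {D P : ℕ} (K : Fin P → Matrix (Fin D) (Fin D) ℂ)
    (ρ : Matrix (Fin D) (Fin D) ℂ) (x y : Fin D) :
    (∑ r : Fin P, K r * ρ * (K r)ᴴ) x y
      = ∑ p : Fin D × Fin D, ρ p.1 p.2 *
          (((Matrix.of fun r (q : Fin D × Fin D) => K r q.1 q.2)ᴴ *
            (Matrix.of fun r (q : Fin D × Fin D) => K r q.1 q.2)) (y, p.2) (x, p.1)) := by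
  simp only [Matrix.sum_apply, Matrix.mul_apply, Matrix.conjTranspose_apply, of_apply,
    Finset.sum_mul, Finset.mul_sum, Fintype.sum_prod_type]
  rw [Finset.sum_comm]
  conv_rhs => rw [Finset.sum_comm]
  refine Finset.sum_congr rfl fun t _ => ?_
  rw [Finset.sum_comm]
  refine Finset.sum_congr rfl fun s _ => ?_
  refine Finset.sum_congr rfl fun r _ => ?_
  ring

/-- Two Kraus families implement the same channel iff their Gram matrices coincide. -/
private lemma chan_eq_iff_gram {D P : ℕ} (K L : Fin P → Matrix (Fin D) (Fin D) ℂ) :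
    (∀ ρ : Matrix (Fin D) (Fin D) ℂ,
        ∑ r : Fin P, K r * ρ * (K r)ᴴ = ∑ r : Fin P, L r * ρ * (L r)ᴴ) ↔
    ((Matrix.of fun r (q : Fin D × Fin D) => K r q.1 q.2)ᴴ *
       (Matrix.of fun r (q : Fin D × Fin D) => K r q.1 q.2)
     = (Matrix.of fun r (q : Fin D × Fin D) => L r q.1 q.2)ᴴ *
       (Matrix.of fun r (q : Fin D × Fin D) => L r q.1 q.2)) := by
  constructor
  · intro h
    ext ⟨i, a⟩ ⟨i', b⟩
    have hh := congrFun (congrFun (h (single b a (1:ℂ))) i') i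
    simp only [Matrix.sum_apply, sandwich_entry] at hh
    simp only [Matrix.mul_apply, Matrix.conjTranspose_apply, of_apply]
    calc ∑ r, star (K r i a) * K r i' b = ∑ r, K r i' b * star (K r i a) :=
          Finset.sum_congr rfl fun r _ => mul_comm _ _
      _ = ∑ r, L r i' b * star (L r i a) := hh
      _ = ∑ r, star (L r i a) * L r i' b := Finset.sum_congr rfl fun r _ => mul_comm _ _
  · intro h ρ
    ext x y
    rw [chan_expand, chan_expand, h]

private lemma sum_kron {m n p q : Type*} {ι : Type*} (s : Finset ι)
    (f : ι → Matrix m n ℂ) (B : Matrix p q ℂ) :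
    (∑ i ∈ s, f i) ⊗ₖ B = ∑ i ∈ s, f i ⊗ₖ B :=
  map_sum (AddMonoidHom.mk' (fun A => A ⊗ₖ B) fun x y => add_kronecker x y B) f s

private lemma UG_dec {D P : ℕ} (Umat A : Fin P → Fin P → Matrix (Fin D) (Fin D) ℂ) :
    (∑ r : Fin P, ∑ q : Fin P, Umat r q ⊗ₖ single r q (1:ℂ)) *
      (∑ j : Fin P, ∑ k : Fin P, A j k ⊗ₖ single j k (1:ℂ)) =
    ∑ r : Fin P, ∑ k : Fin P, (∑ j : Fin P, Umat r j * A j k) ⊗ₖ single r k (1:ℂ) := by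
  simp only [Finset.sum_mul, Finset.mul_sum, ← mul_kronecker_mul]
  have inner : ∀ j r k : Fin P,
      (∑ q : Fin P, (Umat r q * A j k) ⊗ₖ (single r q (1:ℂ) * single j k 1))
        = (Umat r j * A j k) ⊗ₖ single r k (1:ℂ) := by
    intro j r k
    rw [Finset.sum_eq_single j]
    · rw [single_mul_single_same, one_mul]
    · intro q _ hq
      rw [single_mul_single_of_ne (h := hq), kronecker_zero]
    · intro habs
      exact absurd (Finset.mem_univ j) habs
  simp only [inner, sum_kron]
  rw [Finset.sum_comm]
  conv_rhs => rw [Finset.sum_comm]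
  refine Finset.sum_congr rfl fun k _ => ?_
  rw [Finset.sum_comm]

end AuxChannel

/-- Necessary and sufficient condition for deterministic equivalence
under a left unitary transformation. -/
theorem deterministic_equivalence_left_transformation
    (D P : ℕ)
    (G U : Matrix (Fin D × Fin P) (Fin D × Fin P) ℂ)
    (A Umat : Fin P → Fin P → Matrix (Fin D) (Fin D) ℂ)
    (hGdec : G = ∑ j : Fin P, ∑ k : Fin P, A j k ⊗ₖ single j k (1 : ℂ))
    (hUdec : U = ∑ r : Fin P, ∑ q : Fin P, Umat r q ⊗ₖ single r q (1 : ℂ))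
    (hGu : G ∈ Matrix.unitaryGroup (Fin D × Fin P) ℂ)
    (hUu : U ∈ Matrix.unitaryGroup (Fin D × Fin P) ℂ)
    (Y : Matrix (Fin P) (Fin P) ℂ) (hY : Y ∈ Matrix.unitaryGroup (Fin P) ℂ)
    (ξ : Fin P → ℂ) (hξ : ∑ n, star (ξ n) * ξ n = 1) :
    (∀ ρ : Matrix (Fin D) (Fin D) ℂ,
        ptrProg D P ((U * G) * (ρ ⊗ₖ vecMulVec ξ (star ξ)) * (U * G)ᴴ) =
        ptrProg D P (G * (ρ ⊗ₖ vecMulVec (Y.mulVec ξ) (star (Y.mulVec ξ))) * Gᴴ)) ↔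
    (∃ w : Matrix (Fin P) (Fin P) ℂ, w ∈ Matrix.unitaryGroup (Fin P) ℂ ∧
      ∀ r : Fin P,
        ∑ j : Fin P, ∑ k : Fin P, ξ k • (Umat r j * A j k) =
        ∑ j : Fin P, ∑ k : Fin P, ∑ q : Fin P, (w r j * Y k q * ξ q) • A j k) := by
  classical
  -- Kraus operators of the two channels
  set K : Fin P → Matrix (Fin D) (Fin D) ℂ :=
    fun r => ∑ k : Fin P, ξ k • (∑ j : Fin P, Umat r j * A j k) with hK
  set L : Fin P → Matrix (Fin D) (Fin D) ℂ :=
    fun j => ∑ k : Fin P, (Y.mulVec ξ) k • A j k with hL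
  -- channel rewriting
  have hchan1 : ∀ ρ : Matrix (Fin D) (Fin D) ℂ,
      ptrProg D P ((U * G) * (ρ ⊗ₖ vecMulVec ξ (star ξ)) * (U * G)ᴴ)
        = ∑ r : Fin P, K r * ρ * (K r)ᴴ := by
    intro ρ
    rw [hGdec, hUdec, UG_dec]
    exact ptr_kraus (fun r k => ∑ j : Fin P, Umat r j * A j k) ξ ρ
  have hchan2 : ∀ ρ : Matrix (Fin D) (Fin D) ℂ,
      ptrProg D P (G * (ρ ⊗ₖ vecMulVec (Y.mulVec ξ) (star (Y.mulVec ξ))) * Gᴴ)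
        = ∑ r : Fin P, L r * ρ * (L r)ᴴ := by
    intro ρ
    rw [hGdec]
    exact ptr_kraus A (Y.mulVec ξ) ρ
  -- the statement's LHS sums equal K r
  have hKeq : ∀ r : Fin P,
      (∑ j : Fin P, ∑ k : Fin P, ξ k • (Umat r j * A j k)) = K r := by
    intro r
    rw [hK, Finset.sum_comm]
    exact Finset.sum_congr rfl fun k _ => (Finset.smul_sum).symm
  -- the statement's RHS sums equal ∑ j, w r j • L j
  have hLeq : ∀ (w : Matrix (Fin P) (Fin P) ℂ) (r : Fin P),
      (∑ j : Fin P, ∑ k : Fin P, ∑ q : Fin P, (w r j * Y k q * ξ q) • A j k)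
        = ∑ j : Fin P, w r j • L j := by
    intro w r
    refine Finset.sum_congr rfl fun j _ => ?_
    rw [hL, Finset.smul_sum]
    refine Finset.sum_congr rfl fun k _ => ?_
    rw [smul_smul, Matrix.mulVec, dotProduct, Finset.mul_sum, Finset.sum_smul]
    exact Finset.sum_congr rfl fun q _ => by rw [mul_assoc]
  -- bridge: K r = ∑ j, w r j • L j ↔ matrix equation
  have hbridge : ∀ w : Matrix (Fin P) (Fin P) ℂ,
      ((∀ r, K r = ∑ j : Fin P, w r j • L j) ↔
        (Matrix.of fun r (q : Fin D × Fin D) => K r q.1 q.2)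
          = w * (Matrix.of fun r (q : Fin D × Fin D) => L r q.1 q.2)) := by
    intro w
    constructor
    · intro hw
      ext r ⟨i, a⟩
      rw [Matrix.mul_apply]
      simp only [of_apply, hw r, Matrix.sum_apply, Matrix.smul_apply, smul_eq_mul]
    · intro hw r
      ext i a
      have := congrFun (congrFun hw r) (i, a)
      rw [Matrix.mul_apply] at this
      simp only [of_apply] at this
      simp only [Matrix.sum_apply, Matrix.smul_apply, smul_eq_mul]
      exact this
  rw [show (∀ ρ : Matrix (Fin D) (Fin D) ℂ,
        ptrProg D P ((U * G) * (ρ ⊗ₖ vecMulVec ξ (star ξ)) * (U * G)ᴴ) =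
        ptrProg D P (G * (ρ ⊗ₖ vecMulVec (Y.mulVec ξ) (star (Y.mulVec ξ))) * Gᴴ)) ↔
      (∀ ρ : Matrix (Fin D) (Fin D) ℂ,
        ∑ r : Fin P, K r * ρ * (K r)ᴴ = ∑ r : Fin P, L r * ρ * (L r)ᴴ) from
    ⟨fun h ρ => by rw [← hchan1, ← hchan2, h], fun h ρ => by rw [hchan1, hchan2, h]⟩]
  rw [chan_eq_iff_gram]
  constructor
  · intro h
    obtain ⟨w, hwu, hwf⟩ := exists_unitary_factor _ _ h
    refine ⟨w, hwu, fun r => ?_⟩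
    rw [hKeq, hLeq]
    exact ((hbridge w).mpr hwf) r
  · rintro ⟨w, hwu, hw⟩
    have hw' : ∀ r, K r = ∑ j : Fin P, w r j • L j := by
      intro r
      rw [← hKeq, hw r, hLeq]
    have hmat := (hbridge w).mp hw'
    rw [hmat]
    have h1 : wᴴ * w = 1 := Matrix.mem_unitaryGroup_iff'.mp hwu
    rw [Matrix.conjTranspose_mul, Matrix.mul_assoc, ← Matrix.mul_assoc wᴴ w, h1, Matrix.one_mul]
end

section
/- Necessary and sufficient condition for deterministic equivalence under right unitary transformation: let G = Σ_{j,k<P} A_{jk} ⊗ E_{jk} and V = Σ_{r,q<P} V_{rq} ⊗ E_{rq} be unitary matrices on ℂ^D ⊗ ℂ^P, let Y = (y_{kq}) be a unitary P×P matrix, and let ξ ∈ ℂ^P be a unit vector. Then Tr_p[(G·V)(ρ ⊗ |ξ⟩⟨ξ|)(G·V)ᴴ] = Tr_p[G(ρ ⊗ |Yξ⟩⟨Yξ|)Gᴴ] holds for every D×D complex matrix ρ if and only if there exists a unitary P×P matrix (w_{ji}) such that Σ_{k,q<P} ξ_q · A_{jk} · V_{kq} = Σ_{i,k,q<P} w_{ji}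 · y_{kq} · ξ_q · A_{ik} for every j < P. -/
open Matrix Kronecker

lemma toEucLin_mul {m p q : Type*} [Fintype m] [Fintype p] [Fintype q] [DecidableEq p] [DecidableEq q]
    (M : Matrix m p ℂ) (N : Matrix p q ℂ) :
    Matrix.toEuclideanLin (M * N) = (Matrix.toEuclideanLin M) ∘ₗ (Matrix.toEuclideanLin N) := by
  classical
  simp [Matrix.toEuclideanLin_eq_toLin, Matrix.toLin_mul _ (PiLp.basisFun 2 ℂ p) _]

lemma key_exists_unitary {ι : Type*} [Fintype ι] [DecidableEq ι] {n : ℕ}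
    (M N : Matrix ι (Fin n) ℂ) (h : M * Mᴴ = N * Nᴴ) :
    ∃ U ∈ Matrix.unitaryGroup (Fin n) ℂ, M = N * U := by
  classical
  set f : EuclideanSpace ℂ ι →ₗ[ℂ] EuclideanSpace ℂ (Fin n) := Matrix.toEuclideanLin Mᴴ with hf
  set g : EuclideanSpace ℂ ι →ₗ[ℂ] EuclideanSpace ℂ (Fin n) := Matrix.toEuclideanLin Nᴴ with hg
  have hadjf : LinearMap.adjoint f = Matrix.toEuclideanLin M := by
    rw [hf, ← Matrix.toEuclideanLin_conjTranspose_eq_adjoint, Matrix.conjTranspose_conjTranspose]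
  have hadjg : LinearMap.adjoint g = Matrix.toEuclideanLin N := by
    rw [hg, ← Matrix.toEuclideanLin_conjTranspose_eq_adjoint, Matrix.conjTranspose_conjTranspose]
  have hnorm : ∀ x, ‖f x‖ = ‖g x‖ := by
    intro x
    have h1 : (inner ℂ (f x) (f x) : ℂ) = inner ℂ (g x) (g x) := by
      rw [← LinearMap.adjoint_inner_left, ← LinearMap.adjoint_inner_left, hadjf, hadjg]
      have : (Matrix.toEuclideanLin M) (f x) = (Matrix.toEuclideanLin N) (g x) := by
        rw [hf, hg, ← LinearMap.comp_apply, ← LinearMap.comp_apply, ← toEucLin_mul,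
          ← toEucLin_mul, h]
      rw [this]
    rw [inner_self_eq_norm_sq_to_K (𝕜 := ℂ), inner_self_eq_norm_sq_to_K (𝕜 := ℂ)] at h1
    have h2 : (‖f x‖ : ℝ) ^ 2 = (‖g x‖ : ℝ) ^ 2 := by exact_mod_cast h1
    exact (sq_eq_sq₀ (norm_nonneg _) (norm_nonneg _)).mp h2
  have hker : LinearMap.ker g ≤ LinearMap.ker f := by
    intro x hx
    simp only [LinearMap.mem_ker] at hx ⊢
    have := hnorm x
    rw [hx, norm_zero, norm_eq_zero] at this
    exact this
  set ψ : (EuclideanSpace ℂ ι ⧸ LinearMap.ker g) →ₗ[ℂ] EuclideanSpace ℂ (Fin n) :=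
    (LinearMap.ker g).liftQ f hker with hψ
  set φ : (LinearMap.range g) →ₗ[ℂ] EuclideanSpace ℂ (Fin n) :=
    ψ ∘ₗ (g.quotKerEquivRange.symm : (LinearMap.range g) →ₗ[ℂ] _) with hφ
  have hφ_apply : ∀ x : EuclideanSpace ℂ ι, φ ⟨g x, LinearMap.mem_range_self g x⟩ = f x := by
    intro x
    rw [hφ]
    simp only [LinearMap.comp_apply, LinearEquiv.coe_coe]
    rw [g.quotKerEquivRange_symm_apply_image x (LinearMap.mem_range_self g x)]
    simp [hψ, Submodule.mkQ_apply]
  have hφ_norm : ∀ s : LinearMap.range g, ‖φ s‖ = ‖s‖ := by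
    rintro ⟨-, x, rfl⟩
    rw [hφ_apply x]
    exact (hnorm x).trans rfl
  set Φ : EuclideanSpace ℂ (Fin n) →ₗᵢ[ℂ] EuclideanSpace ℂ (Fin n) :=
    LinearIsometry.extend ⟨φ, hφ_norm⟩ with hΦ
  have hΦg : ∀ x, Φ (g x) = f x := by
    intro x
    have := LinearIsometry.extend_apply ⟨φ, hφ_norm⟩ ⟨g x, LinearMap.mem_range_self g x⟩
    rw [hΦ]
    rw [show ((⟨g x, LinearMap.mem_range_self g x⟩ : LinearMap.range g) : EuclideanSpace ℂ (Fin n)) = g x from rfl] at this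
    rw [this]
    exact hφ_apply x
  set W : Matrix (Fin n) (Fin n) ℂ := Matrix.toEuclideanLin.symm Φ.toLinearMap with hW
  have hWlin : Matrix.toEuclideanLin W = Φ.toLinearMap := by rw [hW]; simp
  have hWN : W * Nᴴ = Mᴴ := by
    apply Matrix.toEuclideanLin.injective
    rw [toEucLin_mul, hWlin, ← hf, ← hg]
    ext x : 1
    exact hΦg x
  have hWadj : Wᴴ * W = 1 := by
    apply Matrix.toEuclideanLin.injective
    rw [toEucLin_mul, Matrix.toEuclideanLin_conjTranspose_eq_adjoint, hWlin]
    ext x : 1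
    apply ext_inner_left ℂ
    intro y
    rw [LinearMap.comp_apply, LinearMap.adjoint_inner_right]
    simp only [LinearIsometry.coe_toLinearMap]
    rw [Φ.inner_map_map]
    simp [Matrix.toEuclideanLin_eq_toLin]
  have hWmem : W ∈ Matrix.unitaryGroup (Fin n) ℂ := by
    rw [Matrix.mem_unitaryGroup_iff']
    exact hWadj
  refine ⟨Wᴴ, (Unitary.star_mem hWmem : Wᴴ ∈ _), ?_⟩
  have := congrArg Matrix.conjTranspose hWN
  rw [Matrix.conjTranspose_mul, Matrix.conjTranspose_conjTranspose,
    Matrix.conjTranspose_conjTranspose] at this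
  exact this.symm

lemma ptr_eq (D P : ℕ) (M : Matrix (Fin D × Fin P) (Fin D × Fin P) ℂ)
    (F : Fin P → Fin P → Matrix (Fin D) (Fin D) ℂ)
    (hM : ∀ d n e m, M (d,n) (e,m) = F n m d e)
    (η : Fin P → ℂ) (ρ : Matrix (Fin D) (Fin D) ℂ) :
    ptrProg D P (M * (ρ ⊗ₖ vecMulVec η (star η)) * Mᴴ) =
    ∑ n : Fin P, (∑ m, η m • F n m) * ρ * (∑ m, η m • F n m)ᴴ := by
  ext d d'
  simp only [ptrProg, Matrix.of_apply, Matrix.sum_apply, Matrix.mul_apply,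
    Matrix.conjTranspose_apply, Matrix.kroneckerMap_apply, Matrix.vecMulVec_apply,
    Fintype.sum_prod_type, Matrix.smul_apply, smul_eq_mul, Pi.star_apply, hM,
    Finset.sum_mul, Finset.mul_sum, star_sum, star_mul', RCLike.star_def]
  apply Finset.sum_congr rfl
  intro n _
  conv_rhs => rw [Finset.sum_comm]
  refine Finset.sum_congr rfl fun e' _ => ?_
  conv_rhs => rw [Finset.sum_comm]
  refine Finset.sum_congr rfl fun m' _ => ?_
  conv_rhs => rw [Finset.sum_comm]
  refine Finset.sum_congr rfl fun e _ => Finset.sum_congr rfl fun m _ => by ring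

/-- Necessary and sufficient condition for deterministic equivalence
under a right unitary transformation. -/
theorem deterministic_equivalence_right_transformation
    (D P : ℕ)
    (G V : Matrix (Fin D × Fin P) (Fin D × Fin P) ℂ)
    (A Vmat : Fin P → Fin P → Matrix (Fin D) (Fin D) ℂ)
    (hGdec : G = ∑ j : Fin P, ∑ k : Fin P, A j k ⊗ₖ single j k (1 : ℂ))
    (hVdec : V = ∑ r : Fin P, ∑ q : Fin P, Vmat r q ⊗ₖ single r q (1 : ℂ))
    (hGu : G ∈ Matrix.unitaryGroup (Fin D × Fin P) ℂ)
    (hVu : V ∈ Matrix.unitaryGroup (Fin D × Fin P) ℂ)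
    (Y : Matrix (Fin P) (Fin P) ℂ) (hY : Y ∈ Matrix.unitaryGroup (Fin P) ℂ)
    (ξ : Fin P → ℂ) (hξ : ∑ n, star (ξ n) * ξ n = 1) :
    (∀ ρ : Matrix (Fin D) (Fin D) ℂ,
        ptrProg D P ((G * V) * (ρ ⊗ₖ vecMulVec ξ (star ξ)) * (G * V)ᴴ) =
        ptrProg D P (G * (ρ ⊗ₖ vecMulVec (Y.mulVec ξ) (star (Y.mulVec ξ))) * Gᴴ)) ↔
    (∃ w : Matrix (Fin P) (Fin P) ℂ, w ∈ Matrix.unitaryGroup (Fin P) ℂ ∧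
      ∀ j : Fin P,
        ∑ k : Fin P, ∑ q : Fin P, ξ q • (A j k * Vmat k q) =
        ∑ i : Fin P, ∑ k : Fin P, ∑ q : Fin P, (w j i * Y k q * ξ q) • A i k) := by
  classical
  -- entrywise formulas for G and G*V
  have hGe : ∀ d n e m, G (d, n) (e, m) = A n m d e := by
    intro d n e m
    rw [hGdec]
    simp [Matrix.sum_apply, Matrix.kroneckerMap_apply, Matrix.single, ite_and,
      mul_ite, mul_one, mul_zero, Finset.sum_ite_eq, Finset.sum_ite_eq']
  have hVe : ∀ d n e m, V (d, n) (e, m) = Vmat n m d e := by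
    intro d n e m
    rw [hVdec]
    simp [Matrix.sum_apply, Matrix.kroneckerMap_apply, Matrix.single, ite_and,
      mul_ite, mul_one, mul_zero, Finset.sum_ite_eq, Finset.sum_ite_eq']
  have hGVe : ∀ d n e m, (G * V) (d, n) (e, m) = (∑ k, A n k * Vmat k m) d e := by
    intro d n e m
    simp only [Matrix.mul_apply, Fintype.sum_prod_type, hGe, hVe, Matrix.sum_apply]
    rw [Finset.sum_comm]
  -- Kraus operators
  set B : Fin P → Matrix (Fin D) (Fin D) ℂ :=
    fun n => ∑ m, ξ m • (∑ k, A n k * Vmat k m) with hB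
  set C : Fin P → Matrix (Fin D) (Fin D) ℂ :=
    fun n => ∑ m, (Y.mulVec ξ) m • A n m with hC
  have hBj : ∀ j, B j = ∑ k : Fin P, ∑ q : Fin P, ξ q • (A j k * Vmat k q) := by
    intro j
    rw [hB]
    simp only [Finset.smul_sum]
    exact Finset.sum_comm
  have hCw : ∀ (w : Matrix (Fin P) (Fin P) ℂ) (j : Fin P),
      (∑ i : Fin P, ∑ k : Fin P, ∑ q : Fin P, (w j i * Y k q * ξ q) • A i k) =
      ∑ i, w j i • C i := by
    intro w j
    rw [hC]
    refine Finset.sum_congr rfl fun i _ => ?_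
    simp only [Finset.smul_sum, Matrix.mulVec, dotProduct, Finset.sum_smul, smul_smul]
    refine Finset.sum_congr rfl fun k _ => Finset.sum_congr rfl fun q _ => ?_
    ring_nf
  -- channel formulas
  have hchan : (∀ ρ : Matrix (Fin D) (Fin D) ℂ,
      ptrProg D P ((G * V) * (ρ ⊗ₖ vecMulVec ξ (star ξ)) * (G * V)ᴴ) =
      ptrProg D P (G * (ρ ⊗ₖ vecMulVec (Y.mulVec ξ) (star (Y.mulVec ξ))) * Gᴴ)) ↔
      (∀ ρ : Matrix (Fin D) (Fin D) ℂ, ∑ n, B n * ρ * (B n)ᴴ = ∑ n, C n * ρ * (C n)ᴴ) := by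
    constructor
    · intro h ρ
      have h1 := ptr_eq D P (G * V) (fun n m => ∑ k, A n k * Vmat k m) hGVe ξ ρ
      have h2 := ptr_eq D P G A hGe (Y.mulVec ξ) ρ
      simp only [hB, hC]
      rw [← h1, ← h2]
      exact h ρ
    · intro h ρ
      have h1 := ptr_eq D P (G * V) (fun n m => ∑ k, A n k * Vmat k m) hGVe ξ ρ
      have h2 := ptr_eq D P G A hGe (Y.mulVec ξ) ρ
      rw [h1, h2]
      have := h ρ
      simp only [hB, hC] at this
      exact this
  rw [hchan]
  constructor
  · -- hard direction
    intro h
    set MM : Matrix (Fin D × Fin D) (Fin P) ℂ := Matrix.of fun x j => B j x.1 x.2 with hMM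
    set NN : Matrix (Fin D × Fin D) (Fin P) ℂ := Matrix.of fun x j => C j x.1 x.2 with hNN
    have hMN : MM * MMᴴ = NN * NNᴴ := by
      ext ⟨d, a⟩ ⟨d', b⟩
      have := congrFun (congrFun (h (single a b 1)) d) d'
      simp only [Matrix.sum_apply, Matrix.mul_apply, Matrix.conjTranspose_apply,
        Matrix.single, hMM, hNN, Matrix.of_apply, ite_and, mul_ite, ite_mul, mul_one, mul_zero,
        zero_mul, Finset.sum_ite_eq, Finset.sum_ite_eq', Finset.mem_univ, if_true] at this ⊢
      convert this using 1
    obtain ⟨U, hU, hMU⟩ := key_exists_unitary MM NN hMN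
    refine ⟨Uᵀ, ?_, ?_⟩
    · rw [Matrix.mem_unitaryGroup_iff]
      have h1 : U * star U = 1 := (Matrix.mem_unitaryGroup_iff).mp hU
      have h2 : star U * U = 1 := (Matrix.mem_unitaryGroup_iff').mp hU
      have hstar : star (Uᵀ) = (star U)ᵀ := by
        ext i j
        rfl
      calc Uᵀ * star Uᵀ = Uᵀ * (star U)ᵀ := by rw [hstar]
        _ = (star U * U)ᵀ := by rw [Matrix.transpose_mul]
        _ = 1 := by rw [h2, Matrix.transpose_one]
    · intro j
      rw [← hBj j, hCw Uᵀ j]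
      ext d a
      have := congrFun (congrFun hMU (d, a)) j
      simp only [hMM, hNN, Matrix.of_apply, Matrix.mul_apply] at this
      simp only [Matrix.sum_apply, Matrix.smul_apply, smul_eq_mul, Matrix.transpose_apply]
      rw [show (B j) d a = ∑ i, C i d a * U i j from this]
      exact Finset.sum_congr rfl fun i _ => by ring
  · -- easy direction
    rintro ⟨w, hw, hwB⟩ ρ
    have hwB' : ∀ j, B j = ∑ i, w j i • C i := by
      intro j
      rw [hBj j, hwB j, hCw w j]
    have hww : ∀ i i', (∑ j, w j i * starRingEnd ℂ (w j i')) = if i' = i then 1 else 0 := by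
      intro i i'
      have h2 : star w * w = 1 := (Matrix.mem_unitaryGroup_iff').mp hw
      have := congrFun (congrFun h2 i') i
      simp only [Matrix.mul_apply, Matrix.star_apply, Matrix.one_apply,
        Matrix.star_eq_conjTranspose, Matrix.conjTranspose_apply] at this
      rw [← this]
      exact Finset.sum_congr rfl fun j _ => by rw [RCLike.star_def]; ring
    calc ∑ n, B n * ρ * (B n)ᴴ
        = ∑ n, (∑ i, w n i • C i) * ρ * (∑ i', starRingEnd ℂ (w n i') • (C i')ᴴ) := by
          refine Finset.sum_congr rfl fun n _ => ?_
          rw [hwB' n, Matrix.conjTranspose_sum]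
          congr 1
          refine Finset.sum_congr rfl fun i' _ => ?_
          rw [Matrix.conjTranspose_smul]
          rfl
      _ = ∑ n, ∑ i, ∑ i', (w n i * starRingEnd ℂ (w n i')) • (C i * ρ * (C i')ᴴ) := by
          refine Finset.sum_congr rfl fun n _ => ?_
          rw [Finset.sum_mul, Finset.sum_mul]
          refine Finset.sum_congr rfl fun i _ => ?_
          rw [Finset.mul_sum]
          refine Finset.sum_congr rfl fun i' _ => ?_
          rw [Matrix.smul_mul, Matrix.smul_mul, Matrix.mul_smul, smul_smul]
      _ = ∑ i, ∑ i', (∑ n, w n i * starRingEnd ℂ (w n i')) • (C i * ρ * (C i')ᴴ) := by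
          rw [Finset.sum_comm]
          refine Finset.sum_congr rfl fun i _ => ?_
          rw [Finset.sum_comm]
          refine Finset.sum_congr rfl fun i' _ => ?_
          rw [Finset.sum_smul]
      _ = ∑ n, C n * ρ * (C n)ᴴ := by
          simp only [hww, ite_smul, one_smul, zero_smul, Finset.sum_ite_eq, Finset.sum_ite_eq',
            Finset.mem_univ, if_true]
end

section
/- Necessary and sufficient condition for structural equivalence under left unitary transformation: let G = Σ_{j,k<P} A_{jk} ⊗ E_{jk} and U = Σ_{r,q<P} U_{rq} ⊗ E_{rq} be unitary matrices on ℂ^D ⊗ ℂ^P, let (v_{kq}) be a unitary P×P matrix, let ξ ∈ ℂ^P be a unit vector, and let K > 0 be real. Define 𝒜 = Σ_{j,k,q<P} v_{kq}·ξ_q·A_{jk} and ℬ = Σ_{r,j,k<P} ξ_k·U_{rj}·A_{jk}. Then 𝒜·ρ·𝒜ᴴ = K·ℬ·ρ·ℬᴴ holds for every D×D complex matrix ρ if and only if there exists φ ∈ ℝ with 𝒜 = e^{iφ}·√K·ℬ. -/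
open Matrix Kronecker

lemma mul_stdBasis_mul_conjT_apply (D : ℕ) (M N : Matrix (Fin D) (Fin D) ℂ)
    (i j p q : Fin D) :
    (M * Matrix.single i j (1:ℂ) * Nᴴ) p q = M p i * star (N q j) := by
  simp only [mul_apply, Matrix.single, conjTranspose_apply, of_apply, ite_mul, mul_ite,
    mul_one, mul_zero, zero_mul, one_mul, ite_and]
  simp [Finset.sum_ite_eq, Finset.sum_ite_eq']

lemma mul_star_self_complex (z : ℂ) : z * star z = ((‖z‖ ^ 2 : ℝ) : ℂ) := by
  rw [show (star z) = (starRingEnd ℂ) z from rfl, Complex.mul_conj, Complex.sq_norm]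

lemma mul_star_self_eq_zero (z : ℂ) (h : z * star z = 0) : z = 0 := by
  rw [mul_star_self_complex] at h
  have : ‖z‖ ^ 2 = 0 := by exact_mod_cast h
  have : ‖z‖ = 0 := by
    nlinarith [norm_nonneg z]
  simpa using this

/-- Necessary and sufficient condition for structural equivalence
under a left unitary transformation. -/
theorem structural_equivalence_left_transformation
    (D P : ℕ)
    (G U : Matrix (Fin D × Fin P) (Fin D × Fin P) ℂ)
    (A Umat : Fin P → Fin P → Matrix (Fin D) (Fin D) ℂ)
    (hGdec : G = ∑ j : Fin P, ∑ k : Fin P, A j k ⊗ₖ Matrix.single j k (1 : ℂ))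
    (hUdec : U = ∑ r : Fin P, ∑ q : Fin P, Umat r q ⊗ₖ Matrix.single r q (1 : ℂ))
    (hGu : G ∈ Matrix.unitaryGroup (Fin D × Fin P) ℂ)
    (hUu : U ∈ Matrix.unitaryGroup (Fin D × Fin P) ℂ)
    (v : Matrix (Fin P) (Fin P) ℂ) (hv : v ∈ Matrix.unitaryGroup (Fin P) ℂ)
    (ξ : Fin P → ℂ) (hξ : ∑ n, star (ξ n) * ξ n = 1)
    (K : ℝ) (hK : 0 < K)
    (𝒜 ℬ : Matrix (Fin D) (Fin D) ℂ)
    (h𝒜 : 𝒜 = ∑ j : Fin P, ∑ k : Fin P, ∑ q : Fin P, (v k q * ξ q) • A j k)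
    (hℬ : ℬ = ∑ r : Fin P, ∑ j : Fin P, ∑ k : Fin P, ξ k • (Umat r j * A j k)) :
    (∀ ρ : Matrix (Fin D) (Fin D) ℂ, 𝒜 * ρ * 𝒜ᴴ = (K : ℂ) • (ℬ * ρ * ℬᴴ)) ↔
    ∃ φ : ℝ, 𝒜 = (Complex.exp ((φ : ℂ) * Complex.I) * (Real.sqrt K : ℂ)) • ℬ := by
  have hKne : (K : ℂ) ≠ 0 := by exact_mod_cast ne_of_gt hK
  constructor
  · intro h
    have key : ∀ p i q j : Fin D, 𝒜 p i * star (𝒜 q j) = (K : ℂ) * (ℬ p i * star (ℬ q j)) := by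
      intro p i q j
      have := congrFun (congrFun (h (Matrix.single i j 1)) p) q
      rwa [mul_stdBasis_mul_conjT_apply, Matrix.smul_apply, mul_stdBasis_mul_conjT_apply,
        smul_eq_mul] at this
    by_cases hB : ℬ = 0
    · refine ⟨0, ?_⟩
      have hA : 𝒜 = 0 := by
        ext p i
        have := key p i p i
        rw [hB] at this
        simp only [Matrix.zero_apply, star_zero, mul_zero, zero_mul] at this
        simpa using mul_star_self_eq_zero _ this
      simp [hA, hB]
    · obtain ⟨q0, j0, hq0⟩ : ∃ q0 j0, ℬ q0 j0 ≠ 0 := by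
        by_contra hc
        push_neg at hc
        exact hB (by ext p i; simpa using hc p i)
      have hBB : ℬ q0 j0 * star (ℬ q0 j0) ≠ 0 := fun h0 => hq0 (mul_star_self_eq_zero _ h0)
      have hA0 : 𝒜 q0 j0 ≠ 0 := by
        intro h0
        have := key q0 j0 q0 j0
        rw [h0] at this
        simp only [zero_mul] at this
        exact hBB ((mul_eq_zero.mp this.symm).resolve_left hKne)
      have hs : star (𝒜 q0 j0) ≠ 0 := star_ne_zero.mpr hA0
      set c : ℂ := (K : ℂ) * star (ℬ q0 j0) / star (𝒜 q0 j0) with hc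
      have hAc : ∀ p i : Fin D, 𝒜 p i = c * ℬ p i := by
        intro p i
        have hkey := key p i q0 j0
        have h2 : c * ℬ p i = (K : ℂ) * (ℬ p i * star (ℬ q0 j0)) / star (𝒜 q0 j0) := by
          rw [hc]; ring
        rw [h2, ← hkey, mul_div_cancel_right₀ _ hs]
      have hcc : c * star c = (K : ℂ) := by
        have h1 := key q0 j0 q0 j0
        rw [hAc q0 j0, star_mul'] at h1
        have h2 : c * star c * (ℬ q0 j0 * star (ℬ q0 j0))
            = (K : ℂ) * (ℬ q0 j0 * star (ℬ q0 j0)) := by linear_combination h1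
        exact mul_right_cancel₀ hBB h2
      have habs : ‖c‖ = Real.sqrt K := by
        rw [mul_star_self_complex] at hcc
        have : ‖c‖ ^ 2 = K := by exact_mod_cast hcc
        rw [← this, Real.sqrt_sq (norm_nonneg c)]
      refine ⟨c.arg, ?_⟩
      have hcform : c = Complex.exp ((c.arg : ℂ) * Complex.I) * (Real.sqrt K : ℂ) := by
        rw [← habs, mul_comm]
        exact (Complex.norm_mul_exp_arg_mul_I c).symm
      ext p i
      rw [hAc p i, Matrix.smul_apply, smul_eq_mul, ← hcform]
  · rintro ⟨φ, rfl⟩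
    intro ρ
    set c := Complex.exp ((φ : ℂ) * Complex.I) * (Real.sqrt K : ℂ) with hc
    have hstar : star c = Complex.exp (-((φ : ℂ) * Complex.I)) * (Real.sqrt K : ℂ) := by
      rw [hc, star_mul']
      congr 1
      · rw [show (star (Complex.exp ((φ : ℂ) * Complex.I)))
            = (starRingEnd ℂ) (Complex.exp ((φ : ℂ) * Complex.I)) from rfl,
          ← Complex.exp_conj]
        congr 1
        simp [Complex.conj_ofReal]
      · exact Complex.conj_ofReal _
    have hcc : c * star c = (K : ℂ) := by
      rw [hc, hstar, mul_mul_mul_comm, ← Complex.exp_add, add_neg_cancel, Complex.exp_zero,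
        one_mul, ← Complex.ofReal_mul, Real.mul_self_sqrt hK.le]
    rw [conjTranspose_smul, smul_mul_assoc, smul_mul_assoc, mul_smul_comm, smul_smul, hcc]
end

section
/- Sufficient condition for probabilistic equivalence with different program dimensions: let G = Σ_{j,k<P} A_{jk} ⊗ E_{jk} be a unitary processor on ℂ^D ⊗ ℂ^P. For each r < D let U_r = Σ_{x<P̃, j<P} u^r_{xj}·|x⟩⟨j| be an isometry from ℂ^P to ℂ^{P̃} (U_rᴴ·U_r = 1_P), assume Σ_{x,x'<P̃} u^r_{xj}·conj(u^{r'}_{x'j'}) = 1 for all r, r' < D and j, j' < P, let V be a P̃×P complex matrix with Vᴴ·V = 1_P, and set G̃ = (Σ_{r<D} E_{rr} ⊗ U_r)·G·(1_D ⊗ Vᴴ). Then for every unit vector ξ ∈ ℂ^P and every D×D complex matrix ρ, Tr_p[G̃·(ρ ⊗ |Vξ⟩⟨Vξ|)·G̃ᴴ·(1_D ⊗ |χ̃⟩⟨χ̃|)] = (P/P̃)·Tr_p[G·(ρ ⊗ |ξ⟩⟨ξ|)·Gᴴ·(1_D ⊗ |χ⟩⟨χ|)], where χ = (1/√P)·Σ_{n<P}|n⟩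 and χ̃ = (1/√P̃)·Σ_{n<P̃}|n⟩. Consequently the success probabilities satisfy p̃ = (P/P̃)·p, the two processors implement the same normalized channels (weak probabilistic equivalence), and if P = P̃ they implement them with equal probabilities (strong probabilistic equivalence). -/
open Matrix Kronecker

/-- The uniform "success" program vector `χ = (1/√P) Σ_n |n⟩`. -/
noncomputable def chiVec (P : ℕ) : Fin P → ℂ :=
  fun _ => ((Real.sqrt P : ℝ) : ℂ)⁻¹

lemma kron_conjT {m n p q : Type*} (A : Matrix m n ℂ) (B : Matrix p q ℂ) :
    (A ⊗ₖ B)ᴴ = Aᴴ ⊗ₖ Bᴴ := by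
  ext ⟨i,j⟩ ⟨k,l⟩
  simp [conjTranspose_apply, mul_comm]

lemma chi_entry (Q : ℕ) (m n : Fin Q) :
    vecMulVec (chiVec Q) (star (chiVec Q)) m n = ((Q : ℂ))⁻¹ := by
  simp only [vecMulVec_apply, chiVec, Pi.star_apply, star_inv₀, Complex.star_def,
    Complex.conj_ofReal]
  rw [← mul_inv, ← Complex.ofReal_mul, Real.mul_self_sqrt (Nat.cast_nonneg Q)]
  norm_num

lemma ptr_chi {D Q : ℕ} (X : Matrix (Fin D × Fin Q) (Fin D × Fin Q) ℂ) (d d' : Fin D) :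
    ptrProg D Q (X * ((1 : Matrix (Fin D) (Fin D) ℂ) ⊗ₖ vecMulVec (chiVec Q) (star (chiVec Q)))) d d'
      = ((Q : ℂ))⁻¹ * ∑ x : Fin Q, ∑ y : Fin Q, X (d, x) (d', y) := by
  simp only [ptrProg, Matrix.of_apply, mul_apply, Fintype.sum_prod_type,
    kroneckerMap_apply, Matrix.one_apply, chi_entry, ite_mul, zero_mul, one_mul,
    mul_ite, mul_zero]
  rw [Finset.mul_sum]
  refine Finset.sum_congr rfl fun x _ => ?_
  rw [Finset.sum_comm]
  simp only [Finset.sum_ite_eq, Finset.sum_ite_eq', Finset.mem_univ, if_true]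
  rw [Finset.mul_sum]
  exact Finset.sum_congr rfl fun y _ => by ring

lemma sum_swap4 {α : Type*} [AddCommMonoid α] {ι1 ι2 ι3 ι4 : Type*}
    [Fintype ι1] [Fintype ι2] [Fintype ι3] [Fintype ι4] (f : ι1 → ι2 → ι3 → ι4 → α) :
    ∑ a, ∑ b, ∑ c, ∑ d, f a b c d = ∑ c, ∑ d, ∑ a, ∑ b, f a b c d := by
  calc ∑ a, ∑ b, ∑ c, ∑ d, f a b c d
      = ∑ p : ι1 × ι2, ∑ q : ι3 × ι4, f p.1 p.2 q.1 q.2 := by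
        simp [Fintype.sum_prod_type]
    _ = ∑ q : ι3 × ι4, ∑ p : ι1 × ι2, f p.1 p.2 q.1 q.2 := Finset.sum_comm
    _ = ∑ c, ∑ d, ∑ a, ∑ b, f a b c d := by simp [Fintype.sum_prod_type]

lemma sandwich {P P' : ℕ} (V : Matrix (Fin P') (Fin P) ℂ) (hV : Vᴴ * V = 1) (ξ : Fin P → ℂ) :
    Vᴴ * vecMulVec (V.mulVec ξ) (star (V.mulVec ξ)) * V = vecMulVec ξ (star ξ) := by
  have h1 : Vᴴ *ᵥ (V *ᵥ ξ) = ξ := by rw [mulVec_mulVec, hV, one_mulVec]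
  ext i j
  have e1 : ∑ k, star (V k i) * (V *ᵥ ξ) k = ξ i := by
    simpa [mulVec, dotProduct, conjTranspose_apply] using congrFun h1 i
  have e2 : ∑ l, star ((V *ᵥ ξ) l) * V l j = star (ξ j) := by
    have h := congrFun h1 j
    simp only [mulVec, dotProduct, conjTranspose_apply] at h
    calc ∑ l, star ((V *ᵥ ξ) l) * V l j
        = star (∑ l, star (V l j) * (V *ᵥ ξ) l) := by
          simp [star_mul', mul_comm]
      _ = star (ξ j) := by simp only [mulVec, dotProduct]; rw [h]
  calc (Vᴴ * vecMulVec (V *ᵥ ξ) (star (V *ᵥ ξ)) * V) i j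
      = ∑ l, ∑ k, star (V k i) * (V *ᵥ ξ) k * (star ((V *ᵥ ξ) l) * V l j) := by
        simp only [mul_apply, vecMulVec_apply, conjTranspose_apply, Pi.star_apply,
          Finset.sum_mul]
        exact Finset.sum_congr rfl fun l _ => Finset.sum_congr rfl fun k _ => by ring
    _ = (∑ k, star (V k i) * (V *ᵥ ξ) k) * (∑ l, star ((V *ᵥ ξ) l) * V l j) := by
        rw [Finset.sum_mul_sum]; exact Finset.sum_comm
    _ = ξ i * star (ξ j) := by rw [e1, e2]

/-- Sufficient condition for probabilistic (weak/strong) equivalence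
of processors with different program dimensions. -/
theorem probabilistic_equivalence_different_dimensions
    (D P P' : ℕ)
    (G : Matrix (Fin D × Fin P) (Fin D × Fin P) ℂ)
    (A : Fin P → Fin P → Matrix (Fin D) (Fin D) ℂ)
    (hGdec : G = ∑ j : Fin P, ∑ k : Fin P, A j k ⊗ₖ Matrix.single j k (1 : ℂ))
    (hGu : G ∈ Matrix.unitaryGroup (Fin D × Fin P) ℂ)
    (u : Fin D → Matrix (Fin P') (Fin P) ℂ)
    (hiso : ∀ r : Fin D, (u r)ᴴ * u r = 1)
    (hu : ∀ r r' : Fin D, ∀ j j' : Fin P,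
      ∑ x : Fin P', ∑ x' : Fin P', u r x j * star (u r' x' j') = 1)
    (V : Matrix (Fin P') (Fin P) ℂ) (hV : Vᴴ * V = 1)
    (G' : Matrix (Fin D × Fin P') (Fin D × Fin P') ℂ)
    (hG' : G' = (∑ r : Fin D, Matrix.single r r (1 : ℂ) ⊗ₖ u r) * G *
      ((1 : Matrix (Fin D) (Fin D) ℂ) ⊗ₖ Vᴴ)) :
    ∀ ξ : Fin P → ℂ, (∑ n, star (ξ n) * ξ n = 1) →
      ∀ ρ : Matrix (Fin D) (Fin D) ℂ,
        (ptrProg D P' (G' * (ρ ⊗ₖ vecMulVec (V.mulVec ξ) (star (V.mulVec ξ))) * G'ᴴ *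
            ((1 : Matrix (Fin D) (Fin D) ℂ) ⊗ₖ vecMulVec (chiVec P') (star (chiVec P')))) =
          ((P : ℂ) / (P' : ℂ)) •
            ptrProg D P (G * (ρ ⊗ₖ vecMulVec ξ (star ξ)) * Gᴴ *
              ((1 : Matrix (Fin D) (Fin D) ℂ) ⊗ₖ vecMulVec (chiVec P) (star (chiVec P))))) ∧
        ((G' * (ρ ⊗ₖ vecMulVec (V.mulVec ξ) (star (V.mulVec ξ))) * G'ᴴ *
            ((1 : Matrix (Fin D) (Fin D) ℂ) ⊗ₖ
              vecMulVec (chiVec P') (star (chiVec P')))).trace =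
          ((P : ℂ) / (P' : ℂ)) *
            (G * (ρ ⊗ₖ vecMulVec ξ (star ξ)) * Gᴴ *
              ((1 : Matrix (Fin D) (Fin D) ℂ) ⊗ₖ
                vecMulVec (chiVec P) (star (chiVec P)))).trace) := by
  intro ξ hξ ρ
  set S : Matrix (Fin D × Fin P') (Fin D × Fin P) ℂ :=
    ∑ r : Fin D, Matrix.single r r (1 : ℂ) ⊗ₖ u r with hSdef
  set N : Matrix (Fin D × Fin P) (Fin D × Fin P) ℂ :=
    G * (ρ ⊗ₖ vecMulVec ξ (star ξ)) * Gᴴ with hNdef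
  -- Step A : G' M' G'ᴴ = S N Sᴴ
  have hmid : ((1 : Matrix (Fin D) (Fin D) ℂ) ⊗ₖ Vᴴ) *
      (ρ ⊗ₖ vecMulVec (V.mulVec ξ) (star (V.mulVec ξ))) *
      ((1 : Matrix (Fin D) (Fin D) ℂ) ⊗ₖ V) = ρ ⊗ₖ vecMulVec ξ (star ξ) := by
    rw [← mul_kronecker_mul, ← mul_kronecker_mul, one_mul, mul_one, sandwich V hV ξ]
  have hmid2 : ∀ X : Matrix (Fin D × Fin P) (Fin D × Fin P') ℂ,
      ((1 : Matrix (Fin D) (Fin D) ℂ) ⊗ₖ Vᴴ) *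
        ((ρ ⊗ₖ vecMulVec (V.mulVec ξ) (star (V.mulVec ξ))) *
          (((1 : Matrix (Fin D) (Fin D) ℂ) ⊗ₖ V) * X))
        = (ρ ⊗ₖ vecMulVec ξ (star ξ)) * X := by
    intro X
    rw [← Matrix.mul_assoc, ← Matrix.mul_assoc, hmid]
  have hGMG : G' * (ρ ⊗ₖ vecMulVec (V.mulVec ξ) (star (V.mulVec ξ))) * G'ᴴ
      = S * N * Sᴴ := by
    rw [hG', conjTranspose_mul, conjTranspose_mul, kron_conjT, conjTranspose_one,
      conjTranspose_conjTranspose, hNdef]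
    simp only [Matrix.mul_assoc]
    rw [hmid2 (Gᴴ * Sᴴ)]
  -- Step B : entries of S
  have hSapp : ∀ (a : Fin D) (x : Fin P') (b : Fin D) (n : Fin P),
      S (a, x) (b, n) = if a = b then u a x n else 0 := by
    intro a x b n
    simp only [hSdef, Matrix.sum_apply, kroneckerMap_apply]
    by_cases hab : a = b
    · subst hab
      rw [if_pos rfl, Finset.sum_eq_single a]
      · simp [Matrix.single]
      · intro r _ hr
        simp [Matrix.single, hr]
      · intro h; exact absurd (Finset.mem_univ a) h
    · rw [if_neg hab]
      refine Finset.sum_eq_zero fun r _ => ?_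
      have : ¬(r = a ∧ r = b) := by rintro ⟨rfl, rfl⟩; exact hab rfl
      simp [Matrix.single, this]
  -- Step C : key entry formula
  have hSN : ∀ (d : Fin D) (x : Fin P') (f : Fin D) (m : Fin P),
      (S * N) (d, x) (f, m) = ∑ n : Fin P, u d x n * N (d, n) (f, m) := by
    intro d x f m
    simp only [mul_apply, Fintype.sum_prod_type, hSapp, ite_mul, zero_mul]
    rw [Finset.sum_comm]
    simp [Finset.sum_ite_eq, Finset.mem_univ, if_true]
  have hkey : ∀ (d d' : Fin D) (x y : Fin P'),
      (S * N * Sᴴ) (d, x) (d', y)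
        = ∑ n : Fin P, ∑ m : Fin P, u d x n * N (d, n) (d', m) * star (u d' y m) := by
    intro d d' x y
    rw [mul_apply]
    rw [Fintype.sum_prod_type]
    simp only [conjTranspose_apply, hSN, hSapp, apply_ite (star : ℂ → ℂ), star_zero, mul_ite, mul_zero]
    rw [Finset.sum_comm]
    simp only [Finset.sum_ite_eq, Finset.mem_univ, if_true]
    rw [Finset.sum_comm]
    refine Finset.sum_congr rfl fun m _ => ?_
    rw [Finset.sum_mul]
  -- Step D : main sum identity
  have main : ∀ d d' : Fin D,
      ∑ x : Fin P', ∑ y : Fin P', (S * N * Sᴴ) (d, x) (d', y)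
        = ∑ n : Fin P, ∑ m : Fin P, N (d, n) (d', m) := by
    intro d d'
    calc ∑ x : Fin P', ∑ y : Fin P', (S * N * Sᴴ) (d, x) (d', y)
        = ∑ x : Fin P', ∑ y : Fin P', ∑ n : Fin P, ∑ m : Fin P,
            u d x n * N (d, n) (d', m) * star (u d' y m) := by
          exact Finset.sum_congr rfl fun x _ => Finset.sum_congr rfl fun y _ => hkey d d' x y
      _ = ∑ n : Fin P, ∑ m : Fin P, ∑ x : Fin P', ∑ y : Fin P',
            u d x n * N (d, n) (d', m) * star (u d' y m) := sum_swap4 _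
      _ = ∑ n : Fin P, ∑ m : Fin P, N (d, n) (d', m) := by
          refine Finset.sum_congr rfl fun n _ => Finset.sum_congr rfl fun m _ => ?_
          calc ∑ x : Fin P', ∑ y : Fin P', u d x n * N (d, n) (d', m) * star (u d' y m)
              = N (d, n) (d', m) *
                  ∑ x : Fin P', ∑ y : Fin P', u d x n * star (u d' y m) := by
                rw [Finset.mul_sum]
                refine Finset.sum_congr rfl fun x _ => ?_
                rw [Finset.mul_sum]
                exact Finset.sum_congr rfl fun y _ => by ring
            _ = N (d, n) (d', m) := by rw [hu d d' n m, mul_one]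
  -- first part
  have part1 : ptrProg D P' (G' * (ρ ⊗ₖ vecMulVec (V.mulVec ξ) (star (V.mulVec ξ))) * G'ᴴ *
      ((1 : Matrix (Fin D) (Fin D) ℂ) ⊗ₖ vecMulVec (chiVec P') (star (chiVec P')))) =
      ((P : ℂ) / (P' : ℂ)) • ptrProg D P (N *
        ((1 : Matrix (Fin D) (Fin D) ℂ) ⊗ₖ vecMulVec (chiVec P) (star (chiVec P)))) := by
    ext d d'
    rw [hGMG, Matrix.smul_apply, ptr_chi, ptr_chi, main d d']
    rcases Nat.eq_zero_or_pos P with hP | hP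
    · subst hP
      simp
    · have hPne : (P : ℂ) ≠ 0 := Nat.cast_ne_zero.mpr hP.ne'
      rw [smul_eq_mul]
      field_simp
  refine ⟨part1, ?_⟩
  -- trace part
  have tr : ∀ (Q : ℕ) (M : Matrix (Fin D × Fin Q) (Fin D × Fin Q) ℂ),
      M.trace = ∑ d : Fin D, ptrProg D Q M d d := by
    intro Q M
    simp [Matrix.trace, Matrix.diag, ptrProg, Fintype.sum_prod_type]
  rw [tr, tr, part1]
  simp only [Matrix.smul_apply, smul_eq_mul, Finset.mul_sum]
end

section
/- Positivity of the link product: let A be a positive semidefinite complex matrix on ℂ^a ⊗ ℂ^b (indexed by (Fin a) × (Fin b)) and let B be a positive semidefinite complex matrix on ℂ^b ⊗ ℂ^c. Define the link product A ⋆ B, a matrix on ℂ^a ⊗ ℂ^c, by (A ⋆ B)_{(i,k),(i',k')} = Σ_{j,j'<b} A_{(i,j),(i',j')} · B_{(j,k),(j',k')} (equivalently, A ⋆ B = Tr_b[(A^{T_b} ⊗ 1_c)·(1_a ⊗ B)], partial transposition of A over the shared factor followed by the partial trace over it). Then A ⋆ B is positive semidefinite. -/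
open Matrix
open scoped ComplexOrder

private lemma sum4_perm {α : Type*} [AddCommMonoid α] {ι₁ ι₂ ι₃ ι₄ : Type*}
    [Fintype ι₁] [Fintype ι₂] [Fintype ι₃] [Fintype ι₄]
    (f : ι₁ → ι₂ → ι₃ → ι₄ → α) :
    ∑ j : ι₁, ∑ j' : ι₂, ∑ m : ι₃, ∑ n : ι₄, f j j' m n
      = ∑ m : ι₃, ∑ n : ι₄, ∑ j : ι₁, ∑ j' : ι₂, f j j' m n := by
  calc ∑ j, ∑ j', ∑ m, ∑ n, f j j' m n
      = ∑ j, ∑ m, ∑ j', ∑ n, f j j' m n :=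
        Finset.sum_congr rfl fun j _ => Finset.sum_comm
    _ = ∑ m, ∑ j, ∑ j', ∑ n, f j j' m n := Finset.sum_comm
    _ = ∑ m, ∑ j, ∑ n, ∑ j', f j j' m n :=
        Finset.sum_congr rfl fun m _ => Finset.sum_congr rfl fun j _ => Finset.sum_comm
    _ = ∑ m, ∑ n, ∑ j, ∑ j', f j j' m n :=
        Finset.sum_congr rfl fun m _ => Finset.sum_comm

/-- The link product of matrices `A` on ℂ^a ⊗ ℂ^b and `B` on ℂ^b ⊗ ℂ^c:
`(A ⋆ B)_{(i,k),(i',k')} = Σ_{j,j'} A_{(i,j),(i',j')} · B_{(j,k),(j',k')}`. -/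
noncomputable def linkProduct (a b c : ℕ)
    (A : Matrix (Fin a × Fin b) (Fin a × Fin b) ℂ)
    (B : Matrix (Fin b × Fin c) (Fin b × Fin c) ℂ) :
    Matrix (Fin a × Fin c) (Fin a × Fin c) ℂ :=
  Matrix.of fun ik ik' =>
    ∑ j : Fin b, ∑ j' : Fin b, A (ik.1, j) (ik'.1, j') * B (j, ik.2) (j', ik'.2)

/-- The link product of positive semidefinite matrices is
positive semidefinite. -/
theorem linkProduct_posSemidef (a b c : ℕ)
    (A : Matrix (Fin a × Fin b) (Fin a × Fin b) ℂ) (hA : A.PosSemidef)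
    (B : Matrix (Fin b × Fin c) (Fin b × Fin c) ℂ) (hB : B.PosSemidef) :
    (linkProduct a b c A B).PosSemidef := by
  obtain ⟨C, hC⟩ : ∃ C : Matrix _ _ ℂ, A = Cᴴ * C := by
    open scoped MatrixOrder in exact CStarAlgebra.nonneg_iff_eq_star_mul_self.mp hA.nonneg
  obtain ⟨D, hD⟩ : ∃ D : Matrix _ _ ℂ, B = Dᴴ * D := by
    open scoped MatrixOrder in exact CStarAlgebra.nonneg_iff_eq_star_mul_self.mp hB.nonneg
  set E : Matrix ((Fin a × Fin b) × (Fin b × Fin c)) (Fin a × Fin c) ℂ :=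
    Matrix.of fun mn ik => ∑ j : Fin b, C mn.1 (ik.1, j) * D mn.2 (j, ik.2) with hE
  have key : linkProduct a b c A B = Eᴴ * E := by
    ext ⟨i, k⟩ ⟨i', k'⟩
    show (∑ j : Fin b, ∑ j' : Fin b, A (i, j) (i', j') * B (j, k) (j', k')) = _
    have rhs_eq : (Eᴴ * E) (i, k) (i', k') =
        ∑ mn : (Fin a × Fin b) × (Fin b × Fin c),
          star (∑ j : Fin b, C mn.1 (i, j) * D mn.2 (j, k)) *
          (∑ j : Fin b, C mn.1 (i', j) * D mn.2 (j, k')) := by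
      simp [Matrix.mul_apply, hE]
    rw [rhs_eq]
    have lhs_eq : (∑ j : Fin b, ∑ j' : Fin b, A (i, j) (i', j') * B (j, k) (j', k'))
        = ∑ m : Fin a × Fin b, ∑ n : Fin b × Fin c, ∑ j : Fin b, ∑ j' : Fin b,
            star (C m (i, j)) * C m (i', j') * (star (D n (j, k)) * D n (j', k')) := by
      rw [← sum4_perm fun j j' m n =>
        star (C m (i, j)) * C m (i', j') * (star (D n (j, k)) * D n (j', k'))]
      simp only [hC, hD, Matrix.mul_apply, Matrix.conjTranspose_apply,
        Finset.sum_mul, Finset.mul_sum]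
      exact Finset.sum_congr rfl fun j _ => Finset.sum_congr rfl fun j' _ => Finset.sum_comm
    rw [lhs_eq]
    conv_rhs => rw [Fintype.sum_prod_type]
    refine Finset.sum_congr rfl fun m _ => Finset.sum_congr rfl fun n _ => ?_
    simp only [star_sum, star_mul', Finset.sum_mul, Finset.mul_sum]
    rw [Finset.sum_comm]
    exact Finset.sum_congr rfl fun j _ => Finset.sum_congr rfl fun j' _ => by ring
  rw [key]
  exact Matrix.posSemidef_conjTranspose_mul_self E
end

section
/- Stinespring dilation for finite-dimensional quantum channels: let Φ be a ℂ-linear map from n×n complex matrices to m×m complex matrices that is completely positive (its Choi matrix C(Φ) = Σ_{i,j<n} Φ(E_{ij}) ⊗ E_{ij} is positive semidefinite) and trace preserving (Tr(Φ(X)) = Tr(X) for all X). Then there exist d with 1 ≤ d ≤ n·m and a complex matrix V, indexed by (Fin m) × (Fin d) rows and Fin n columns, satisfying Vᴴ·V = 1_n (an isometry), such that Φ(ρ) = Tr₂(V·ρ·Vᴴ) for every n×n complex matrix ρ, where Tr₂ is the partial trace over the d-dimensional ancillary factor. -/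
open Matrix Kronecker
open scoped ComplexOrder

/-- The Choi matrix of a linear map `Φ` on matrices:
`C(Φ) = Σ_{i,j} Φ(E_{ij}) ⊗ E_{ij}`. -/
noncomputable def choiMatrix (m n : ℕ)
    (Φ : Matrix (Fin n) (Fin n) ℂ →ₗ[ℂ] Matrix (Fin m) (Fin m) ℂ) :
    Matrix (Fin m × Fin n) (Fin m × Fin n) ℂ :=
  ∑ i : Fin n, ∑ j : Fin n,
    (Φ (single i j (1 : ℂ))) ⊗ₖ single i j (1 : ℂ)

/-- Partial trace over the second (ancillary) tensor factor. -/
noncomputable def trSnd (m d : ℕ)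
    (M : Matrix (Fin m × Fin d) (Fin m × Fin d) ℂ) :
    Matrix (Fin m) (Fin m) ℂ :=
  Matrix.of fun p q => ∑ i : Fin d, M (p, i) (q, i)

lemma choi_apply (m n : ℕ)
    (Φ : Matrix (Fin n) (Fin n) ℂ →ₗ[ℂ] Matrix (Fin m) (Fin m) ℂ)
    (p q : Fin m) (i j : Fin n) :
    choiMatrix m n Φ (p, i) (q, j) = Φ (single i j 1) p q := by
  simp [choiMatrix, Matrix.sum_apply, kroneckerMap_apply, Matrix.single,
    Finset.sum_ite_eq, mul_ite, ite_and]

lemma phi_apply_entry (m n : ℕ)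
    (Φ : Matrix (Fin n) (Fin n) ℂ →ₗ[ℂ] Matrix (Fin m) (Fin m) ℂ)
    (ρ : Matrix (Fin n) (Fin n) ℂ) (p q : Fin m) :
    Φ ρ p q = ∑ i : Fin n, ∑ j : Fin n, ρ i j * Φ (single i j 1) p q := by
  conv_lhs => rw [matrix_eq_sum_single ρ]
  rw [map_sum, Matrix.sum_apply]
  refine Finset.sum_congr rfl fun i _ => ?_
  rw [map_sum, Matrix.sum_apply]
  refine Finset.sum_congr rfl fun j _ => ?_
  have h : single i j (ρ i j) = (ρ i j) • single i j (1:ℂ) := by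
    rw [smul_single, smul_eq_mul, mul_one]
  rw [h, _root_.map_smul, Matrix.smul_apply, smul_eq_mul]


/-- Stinespring dilation: a completely positive trace-preserving map
is `ρ ↦ Tr₂(V ρ Vᴴ)` for an isometry `V : ℂ^n → ℂ^m ⊗ ℂ^d` with `1 ≤ d ≤ n·m`. -/
theorem stinespring_dilation (m n : ℕ) (hn : 1 ≤ n)
    (Φ : Matrix (Fin n) (Fin n) ℂ →ₗ[ℂ] Matrix (Fin m) (Fin m) ℂ)
    (hCP : (choiMatrix m n Φ).PosSemidef)
    (hTP : ∀ X : Matrix (Fin n) (Fin n) ℂ, (Φ X).trace = X.trace) :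
    ∃ d : ℕ, 1 ≤ d ∧ d ≤ n * m ∧
      ∃ V : Matrix (Fin m × Fin d) (Fin n) ℂ,
        Vᴴ * V = 1 ∧
        ∀ ρ : Matrix (Fin n) (Fin n) ℂ, Φ ρ = trSnd m d (V * ρ * Vᴴ) := by
  -- m = 0 is impossible by trace preservation
  obtain rfl | hm := Nat.eq_zero_or_pos m
  · exfalso
    have h := hTP 1
    rw [Matrix.trace_one] at h
    simp [Matrix.trace] at h
    have : (n : ℂ) ≠ 0 := Nat.cast_ne_zero.2 (by omega)
    exact this h.symm
  obtain ⟨S, hSdef⟩ : ∃ S : Matrix (Fin m × Fin n) (Fin m × Fin n) ℂ,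
      choiMatrix m n Φ = star S * S := by
    open scoped MatrixOrder in
    exact CStarAlgebra.nonneg_iff_eq_star_mul_self.mp hCP.nonneg
  have hSS : ∀ x y, choiMatrix m n Φ x y = ∑ z, star (S z x) * S z y := by
    intro x y
    rw [hSdef, Matrix.mul_apply]
    rfl
  let e : Fin (n * m) ≃ Fin m × Fin n :=
    (finCongr (Nat.mul_comm n m)).trans finProdFinEquiv.symm
  set V : Matrix (Fin m × Fin (n * m)) (Fin n) ℂ :=
    Matrix.of (fun pk j => star (S (e pk.2) (pk.1, j))) with hV
  have hVapp : ∀ p k j, V (p, k) j = star (S (e k) (p, j)) := fun _ _ _ => rfl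
  have hkey : ∀ (p q : Fin m) (i j : Fin n),
      ∑ k : Fin (n * m), star (S (e k) (p, i)) * S (e k) (q, j)
        = Φ (single i j 1) p q := by
    intro p q i j
    rw [← choi_apply, hSS]
    exact Equiv.sum_comp e (fun z => star (S z (p, i)) * S z (q, j))
  have swap3 : ∀ (f : Fin n → Fin n → Fin (n * m) → ℂ),
      (∑ i, ∑ j, ∑ k, f i j k) = ∑ k, ∑ j, ∑ i, f i j k := by
    intro f
    rw [Finset.sum_comm]
    refine (Finset.sum_congr rfl fun j _ => Finset.sum_comm).trans ?_
    rw [Finset.sum_comm]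
  refine ⟨n * m, Nat.one_le_iff_ne_zero.2 (by positivity), le_rfl, V, ?_, ?_⟩
  · -- isometry
    ext i j
    have h1 : (Vᴴ * V) i j
        = ∑ p : Fin m, ∑ k : Fin (n * m),
            star (S (e k) (p, j)) * S (e k) (p, i) := by
      rw [Matrix.mul_apply, Fintype.sum_prod_type]
      refine Finset.sum_congr rfl fun p _ => Finset.sum_congr rfl fun k _ => ?_
      rw [conjTranspose_apply, hVapp, hVapp, star_star, mul_comm]
    rw [h1]
    simp_rw [hkey]
    have h2 : ∑ p : Fin m, Φ (single j i 1) p p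
        = (single j i (1 : ℂ)).trace := by
      rw [← hTP]
      simp [Matrix.trace, Matrix.diag]
    rw [h2]
    by_cases hij : i = j <;>
      simp [Matrix.trace, Matrix.diag, Matrix.single, Matrix.one_apply, hij,
        Finset.sum_ite_eq, eq_comm, ite_and]
  · -- channel formula
    intro ρ
    ext p q
    have hR : trSnd m (n * m) (V * ρ * Vᴴ) p q
        = ∑ k : Fin (n * m), ∑ j' : Fin n, ∑ i' : Fin n,
            star (S (e k) (p, i')) * ρ i' j' * S (e k) (q, j') := by
      show ∑ k : Fin (n * m), (V * ρ * Vᴴ) (p, k) (q, k) = _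
      refine Finset.sum_congr rfl fun k _ => ?_
      rw [Matrix.mul_apply]
      refine Finset.sum_congr rfl fun j' _ => ?_
      rw [conjTranspose_apply, hVapp, star_star, Matrix.mul_apply, Finset.sum_mul]
      refine Finset.sum_congr rfl fun i' _ => ?_
      rw [hVapp]
    rw [hR, phi_apply_entry]
    simp_rw [← hkey, Finset.mul_sum]
    rw [swap3]
    refine Finset.sum_congr rfl fun k _ => Finset.sum_congr rfl fun j' _ =>
      Finset.sum_congr rfl fun i' _ => ?_
    ring
end
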